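/- arXiv:2410.00472 — 5 statements merged into one kernel-verified Lean document; each statement's English description precedes it below -/
import Mathlib

section
/- For any finite Borel measures μ and ν on S, the set of maximal ordered component pairs for (μ, ν) is nonempty: there exists an ordered component pair (μ', ν') for (μ, ν) such that μ'(S) = α_O(μ, ν), i.e., the supremum defining the ordered affinity is attained. -/
open MeasureTheory Filter Topology




noncomputable section

/-- `μ` is stochastically dominated by `ν`: equal total mass and `μ I ≤ ν I`
for every increasing (upper) Borel set `I`. -/
def StochDom {α : Type*} [MeasurableSpace α] [Preorder α] (μ ν : Measure α) : Prop :=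
  μ Set.univ = ν Set.univ ∧
    ∀ I : Set α, MeasurableSet I → IsUpperSet I → μ I ≤ ν I

/-- `(μ', ν')` is an ordered component pair for `(μ, ν)`. -/
def IsOCP {α : Type*} [MeasurableSpace α] [Preorder α] (μ ν μ' ν' : Measure α) : Prop :=
  μ' ≤ μ ∧ ν' ≤ ν ∧ StochDom μ' ν'

/-- The ordered affinity `α_O(μ, ν)`: supremum of the mass `μ'(S)` over all
ordered component pairs `(μ', ν')` for `(μ, ν)`. -/
def alphaO {α : Type*} [MeasurableSpace α] [Preorder α] (μ ν : Measure α) : ℝ :=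
  sSup {r : ℝ | ∃ μ' ν' : Measure α, IsOCP μ ν μ' ν' ∧ r = (μ' Set.univ).toReal}

/-- The total ordered variation distance `γ(μ, ν) = 2 - α_O(μ, ν) - α_O(ν, μ)`. -/
def gammaO {α : Type*} [MeasurableSpace α] [Preorder α] (μ ν : Measure α) : ℝ :=
  2 - alphaO μ ν - alphaO ν μ

variable {S : Type*} [TopologicalSpace S] [PolishSpace S] [MeasurableSpace S]
  [BorelSpace S] [PartialOrder S] [OrderClosedTopology S] [Nonempty S]



lemma exists_ultralimit_measure {α : Type*} [MeasurableSpace α]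
    (μ : Measure α) [IsFiniteMeasure μ] (U : Ultrafilter ℕ)
    (ms : ℕ → Measure α) (hle : ∀ n, ms n ≤ μ) :
    ∃ μ' : Measure α, μ' ≤ μ ∧ ∀ A : Set α, MeasurableSet A →
      Tendsto (fun n => ((ms n) A).toReal) (↑U) (𝓝 ((μ' A).toReal)) := by
  set C : ℝ := (μ Set.univ).toReal with hC
  have hub : ∀ n (A : Set α), ms n A ≤ μ Set.univ := fun n A =>
    (measure_mono (Set.subset_univ A)).trans (hle n Set.univ)
  have hfin : ∀ n (A : Set α), ms n A ≠ ⊤ := fun n A =>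
    ((hub n A).trans_lt (measure_lt_top μ _)).ne
  have hbd : ∀ n (A : Set α), ((ms n) A).toReal ∈ Set.Icc 0 C := fun n A =>
    ⟨ENNReal.toReal_nonneg, ENNReal.toReal_mono (measure_ne_top μ _) (hub n A)⟩
  -- ultrafilter limits exist
  have hex : ∀ A : Set α, ∃ x, Tendsto (fun n => ((ms n) A).toReal) (↑U) (𝓝 x) := by
    intro A
    obtain ⟨x, _, hx⟩ := (isCompact_Icc (a := (0:ℝ)) (b := C)).ultrafilter_le_nhds
      (U.map fun n => ((ms n) A).toReal)
      (by rw [Ultrafilter.coe_map, le_principal_iff]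
          exact mem_map.mpr (Filter.univ_mem' fun n => hbd n A))
    exact ⟨x, by rwa [Tendsto, ← Ultrafilter.coe_map]⟩
  set l : Set α → ℝ := fun A => (hex A).choose with hl
  have hlt : ∀ A, Tendsto (fun n => ((ms n) A).toReal) (↑U) (𝓝 (l A)) :=
    fun A => (hex A).choose_spec
  have hl0 : ∀ A, 0 ≤ l A := fun A =>
    le_of_tendsto_of_tendsto' tendsto_const_nhds (hlt A) fun n => ENNReal.toReal_nonneg
  have hlle : ∀ A : Set α, MeasurableSet A → l A ≤ (μ A).toReal := fun A hA =>
    le_of_tendsto (hlt A) (Filter.Eventually.of_forall fun n =>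
      ENNReal.toReal_mono (measure_ne_top μ _) (hle n A))
  -- finite additivity over finsets
  have hadd : ∀ (f : ℕ → Set α), (∀ i, MeasurableSet (f i)) → Pairwise (Function.onFun Disjoint f) →
      ∀ (s : Finset ℕ), l (⋃ i ∈ s, f i) = ∑ i ∈ s, l (f i) := by
    intro f hf hdisj s
    refine tendsto_nhds_unique (hlt _) ?_
    have : ∀ n : ℕ, ((ms n) (⋃ i ∈ s, f i)).toReal = ∑ i ∈ s, ((ms n) (f i)).toReal := by
      intro n
      rw [measure_biUnion_finset (fun i _ j _ hij => hdisj hij) (fun i _ => hf i)]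
      exact ENNReal.toReal_sum fun i _ => hfin n _
    simp only [this]
    exact tendsto_finset_sum _ fun i _ => hlt (f i)
  -- countable additivity
  have hcadd : ∀ ⦃f : ℕ → Set α⦄, (∀ i, MeasurableSet (f i)) → Pairwise (Function.onFun Disjoint f) →
      HasSum (fun i => l (f i)) (l (⋃ i, f i)) := by
    intro f hf hdisj
    rw [hasSum_iff_tendsto_nat_of_nonneg (fun i => hl0 _)]
    set B : ℕ → Set α := fun k => ⋃ i ∈ Finset.range k, f i with hB
    have hBmeas : ∀ k, MeasurableSet (B k) := fun k => Finset.measurableSet_biUnion _ fun i _ => hf i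
    have hBsub : ∀ k, B k ⊆ ⋃ i, f i := fun k =>
      Set.iUnion₂_subset fun i _ => Set.subset_iUnion f i
    have key : ∀ k, ∑ i ∈ Finset.range k, l (f i) = l (⋃ i, f i) - l ((⋃ i, f i) \ B k) := by
      intro k
      have hsplit : l (⋃ i, f i) = l (B k) + l ((⋃ i, f i) \ B k) := by
        refine tendsto_nhds_unique (hlt _) ?_
        have : ∀ n : ℕ, ((ms n) (⋃ i, f i)).toReal
            = ((ms n) (B k)).toReal + ((ms n) ((⋃ i, f i) \ B k)).toReal := by
          intro n
          rw [← ENNReal.toReal_add (hfin n _) (hfin n _),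
            measure_add_diff (hBmeas k).nullMeasurableSet (⋃ i, f i),
            Set.union_eq_self_of_subset_left (hBsub k)]
        simp only [this]
        exact ((hlt _).add (hlt _))
      rw [← hadd f hf hdisj (Finset.range k), hsplit]; ring
    simp only [key]
    have hR0 : Tendsto (fun k => l ((⋃ i, f i) \ B k)) atTop (𝓝 0) := by
      refine squeeze_zero (fun k => hl0 _) (fun k => hlle _ (MeasurableSet.iUnion hf |>.diff (hBmeas k))) ?_
      have hmono : Monotone B := fun a b hab =>
        Set.biUnion_subset_biUnion_left (Finset.range_subset_range.mpr hab)
      have hBU : (⋃ k, B k) = ⋃ i, f i := by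
        apply Set.Subset.antisymm (Set.iUnion_subset hBsub)
        exact Set.iUnion_subset fun i => le_trans
          (Set.subset_biUnion_of_mem (Finset.self_mem_range_succ i)) (Set.subset_iUnion B (i+1))
      have h1 : Tendsto (fun k => (μ (B k)).toReal) atTop (𝓝 ((μ (⋃ i, f i)).toReal)) := by
        have := tendsto_measure_iUnion_atTop (μ := μ) hmono
        rw [hBU] at this
        exact (ENNReal.tendsto_toReal (measure_ne_top μ _)).comp this
      have h2 : ∀ k, (μ ((⋃ i, f i) \ B k)).toReal = (μ (⋃ i, f i)).toReal - (μ (B k)).toReal := by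
        intro k
        rw [measure_diff (hBsub k) (hBmeas k).nullMeasurableSet (measure_ne_top μ _)]
        exact ENNReal.toReal_sub_of_le (measure_mono (hBsub k)) (measure_ne_top μ _)
      simp only [h2]
      simpa using h1.const_sub ((μ (⋃ i, f i)).toReal)
    simpa using (tendsto_const_nhds.sub hR0)
  refine ⟨Measure.ofMeasurable (fun A _ => ENNReal.ofReal (l A))
      (by
        have : l ∅ = 0 := tendsto_nhds_unique (hlt ∅) (by simpa using (tendsto_const_nhds
          (α := ℝ) (f := (↑U : Filter ℕ)) (a := 0)))
        simp [this])
      (fun f hf hdisj => by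
        show ENNReal.ofReal (l (⋃ i, f i)) = ∑' i, ENNReal.ofReal (l (f i))
        rw [← (hcadd hf hdisj).tsum_eq, ENNReal.ofReal_tsum_of_nonneg (fun i => hl0 _)
          (hcadd hf hdisj).summable]), ?_, ?_⟩
  · refine Measure.le_iff.mpr fun A hA => ?_
    rw [Measure.ofMeasurable_apply A hA]
    exact ENNReal.ofReal_le_of_le_toReal (hlle A hA)
  · intro A hA
    rw [Measure.ofMeasurable_apply A hA, ENNReal.toReal_ofReal (hl0 A)]
    exact hlt A

/-- Maximal ordered component pairs exist: the supremum defining the ordered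
affinity is attained. -/
theorem exists_maximal_ordered_component_pair
    (μ ν : Measure S) [IsFiniteMeasure μ] [IsFiniteMeasure ν] :
    ∃ μ' ν' : Measure S, IsOCP μ ν μ' ν' ∧ (μ' Set.univ).toReal = alphaO μ ν := by
  classical
  set T : Set ℝ :=
    {r : ℝ | ∃ μ' ν' : Measure S, IsOCP μ ν μ' ν' ∧ r = (μ' Set.univ).toReal} with hT
  have hne : T.Nonempty :=
    ⟨0, 0, 0, ⟨Measure.zero_le μ, Measure.zero_le ν, rfl, fun I _ _ => le_rfl⟩, by simp⟩
  have hbdd : BddAbove T := by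
    refine ⟨(μ Set.univ).toReal, fun r hr => ?_⟩
    obtain ⟨μ', ν', ⟨hμ', _, _⟩, rfl⟩ := hr
    exact ENNReal.toReal_mono (measure_ne_top μ _) (hμ' Set.univ)
  obtain ⟨u, -, hu, huT⟩ := exists_seq_tendsto_sSup hne hbdd
  choose μs νs hocp hval using huT
  set U : Ultrafilter ℕ := Ultrafilter.of atTop with hU
  have hUle : (↑U : Filter ℕ) ≤ atTop := Ultrafilter.of_le _
  obtain ⟨μ', hμ'le, hμ't⟩ := exists_ultralimit_measure μ U μs fun n => (hocp n).1
  obtain ⟨ν', hν'le, hν't⟩ := exists_ultralimit_measure ν U νs fun n => (hocp n).2.1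
  have hμfin : ∀ A : Set S, μ' A ≠ ⊤ := fun A => ((hμ'le A).trans_lt (measure_lt_top μ A)).ne
  have hνfin : ∀ A : Set S, ν' A ≠ ⊤ := fun A => ((hν'le A).trans_lt (measure_lt_top ν A)).ne
  have hμsfin : ∀ n (A : Set S), μs n A ≠ ⊤ := fun n A =>
    (((hocp n).1 A).trans_lt (measure_lt_top μ A)).ne
  have hνsfin : ∀ n (A : Set S), νs n A ≠ ⊤ := fun n A =>
    (((hocp n).2.1 A).trans_lt (measure_lt_top ν A)).ne
  refine ⟨μ', ν', ⟨hμ'le, hν'le, ?_, ?_⟩, ?_⟩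
  · -- equal total masses
    refine (ENNReal.toReal_eq_toReal_iff' (hμfin _) (hνfin _)).mp ?_
    refine tendsto_nhds_unique (hμ't Set.univ MeasurableSet.univ) ?_
    refine (hν't Set.univ MeasurableSet.univ).congr fun n => ?_
    rw [(hocp n).2.2.1]
  · -- upper sets
    intro I hI hup
    refine (ENNReal.toReal_le_toReal (hμfin _) (hνfin _)).mp ?_
    refine le_of_tendsto_of_tendsto' (hμ't I hI) (hν't I hI) fun n =>
      ENNReal.toReal_mono (hνsfin n I) ((hocp n).2.2.2 I hI hup)
  · -- maximality
    have halpha : alphaO μ ν = sSup T := rfl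
    rw [halpha]
    exact tendsto_nhds_unique (hμ't Set.univ MeasurableSet.univ)
      ((hu.mono_left hUle).congr fun n => hval n)
end
end

section
/- If {μ_n}_{n ≥ 1} is a sequence of Borel probability measures on S that is tight (together with μ₀) and γ(μ_n, μ₀) → 0 as n → ∞, then μ_n converges weakly to μ₀ (i.e., ∫ h dμ_n → ∫ h dμ₀ for every bounded continuous h : S → ℝ). -/
open MeasureTheory

noncomputable section

set_option linter.unusedSectionVars false
set_option linter.unusedVariables false
set_option maxHeartbeats 1000000

open Set Filter Topology

namespace GammaOAux


lemma exists_dyadic_btwn {a b : ℝ} (ha : 0 ≤ a) (hab : a < b) :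
    ∃ n k : ℕ, 0 < k ∧ a < (k : ℝ) / 2 ^ n ∧ (k : ℝ) / 2 ^ n < b := by
  obtain ⟨n, hn⟩ := exists_pow_lt_of_lt_one (sub_pos.2 hab) (by norm_num : (1:ℝ)/2 < 1)
  have h2n : (0:ℝ) < 2 ^ n := by positivity
  have hn' : (1:ℝ) / 2 ^ n < b - a := by
    calc (1:ℝ) / 2 ^ n = ((1:ℝ)/2) ^ n := by rw [div_pow, one_pow]
    _ < b - a := hn
  refine ⟨n, ⌊a * 2 ^ n⌋₊ + 1, Nat.succ_pos _, ?_, ?_⟩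
  · rw [lt_div_iff₀ h2n]
    push_cast
    exact Nat.lt_floor_add_one _
  · rw [div_lt_iff₀ h2n]
    have h1 : (⌊a * 2 ^ n⌋₊ : ℝ) ≤ a * 2 ^ n := Nat.floor_le (by positivity)
    push_cast
    calc (⌊a * 2 ^ n⌋₊ : ℝ) + 1 ≤ a * 2 ^ n + 1 := by linarith
    _ < b * 2 ^ n := by
        have := (div_lt_iff₀ h2n).1 hn'
        nlinarith

section OrderSep
variable {X : Type*} [TopologicalSpace X] [CompactSpace X] [T2Space X]
  [PartialOrder X] [OrderClosedTopology X]

section OrderSep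
variable {X : Type*} [TopologicalSpace X] [CompactSpace X] [T2Space X]
  [PartialOrder X] [OrderClosedTopology X]

lemma upClosure_closed {C : Set X} (hC : IsClosed C) :
    IsClosed {z : X | ∃ w ∈ C, w ≤ z} := by
  have h1 : {z : X | ∃ w ∈ C, w ≤ z} =
      Prod.snd '' ({p : X × X | p.1 ≤ p.2} ∩ C ×ˢ (univ : Set X)) := by
    ext z
    constructor
    · rintro ⟨w, hw, hwz⟩; exact ⟨(w, z), ⟨hwz, hw, trivial⟩, rfl⟩
    · rintro ⟨p, ⟨hle, hp1, -⟩, rfl⟩; exact ⟨p.1, hp1, hle⟩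
  rw [h1]
  have hcl : IsClosed ({p : X × X | p.1 ≤ p.2} ∩ C ×ˢ (univ : Set X)) :=
    OrderClosedTopology.isClosed_le'.inter (hC.prod isClosed_univ)
  exact (hcl.isCompact.image continuous_snd).isClosed

lemma dnClosure_closed {C : Set X} (hC : IsClosed C) :
    IsClosed {z : X | ∃ w ∈ C, z ≤ w} := by
  have h1 : {z : X | ∃ w ∈ C, z ≤ w} =
      Prod.fst '' ({p : X × X | p.1 ≤ p.2} ∩ (univ : Set X) ×ˢ C) := by
    ext z
    constructor
    · rintro ⟨w, hw, hwz⟩; exact ⟨(z, w), ⟨hwz, trivial, hw⟩, rfl⟩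
    · rintro ⟨p, ⟨hle, -, hp2⟩, rfl⟩; exact ⟨p.2, hp2, hle⟩
  rw [h1]
  have hcl : IsClosed ({p : X × X | p.1 ≤ p.2} ∩ (univ : Set X) ×ˢ C) :=
    OrderClosedTopology.isClosed_le'.inter (isClosed_univ.prod hC)
  exact (hcl.isCompact.image continuous_fst).isClosed

lemma upClosure_upper (C : Set X) : IsUpperSet {z : X | ∃ w ∈ C, w ≤ z} := by
  rintro a b hab ⟨w, hw, hwa⟩; exact ⟨w, hw, hwa.trans hab⟩

lemma dnClosure_lower (C : Set X) : IsLowerSet {z : X | ∃ w ∈ C, z ≤ w} := by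
  rintro a b hab ⟨w, hw, hwa⟩; exact ⟨w, hw, hab.trans hwa⟩

lemma point_sep {a b : X} (h : ¬ a ≤ b) :
    ∃ P Q : Set X, IsClosed P ∧ IsUpperSet P ∧ P ∈ 𝓝 a ∧
      IsClosed Q ∧ IsLowerSet Q ∧ Q ∈ 𝓝 b ∧ Disjoint P Q := by
  have hopen : IsOpen {p : X × X | p.1 ≤ p.2}ᶜ := OrderClosedTopology.isClosed_le'.isOpen_compl
  have hab : (a, b) ∈ {p : X × X | p.1 ≤ p.2}ᶜ := h
  obtain ⟨O₁, O₂, hO₁, hO₂, ha, hb, hsub⟩ := isOpen_prod_iff.1 hopen a b hab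
  obtain ⟨C₁, hC₁n, hC₁c, hC₁s⟩ := exists_mem_nhds_isClosed_subset (hO₁.mem_nhds ha)
  obtain ⟨C₂, hC₂n, hC₂c, hC₂s⟩ := exists_mem_nhds_isClosed_subset (hO₂.mem_nhds hb)
  refine ⟨{z | ∃ w ∈ C₁, w ≤ z}, {z | ∃ w ∈ C₂, z ≤ w},
    upClosure_closed hC₁c, upClosure_upper _, ?_, dnClosure_closed hC₂c, dnClosure_lower _, ?_, ?_⟩
  · exact Filter.mem_of_superset hC₁n fun z hz => ⟨z, hz, le_rfl⟩
  · exact Filter.mem_of_superset hC₂n fun z hz => ⟨z, hz, le_rfl⟩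
  · rw [Set.disjoint_left]
    rintro z ⟨w₁, hw₁, hw₁z⟩ ⟨w₂, hw₂, hzw₂⟩
    exact hsub (Set.mk_mem_prod (hC₁s hw₁) (hC₂s hw₂)) (hw₁z.trans hzw₂)


lemma order_normal {A B : Set X} (hA : IsClosed A) (hAu : IsUpperSet A)
    (hB : IsClosed B) (hBl : IsLowerSet B) (hd : Disjoint A B) :
    ∃ P Q : Set X, IsClosed P ∧ IsUpperSet P ∧ A ⊆ interior P ∧
      IsClosed Q ∧ IsLowerSet Q ∧ B ⊆ interior Q ∧ Disjoint P Q := by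
  -- Step 1: for each a ∈ A, separate a from all of B
  have step1 : ∀ a ∈ A, ∃ P Q : Set X, IsClosed P ∧ IsUpperSet P ∧ P ∈ 𝓝 a ∧
      IsClosed Q ∧ IsLowerSet Q ∧ B ⊆ interior Q ∧ Disjoint P Q := by
    intro a haA
    have hsep : ∀ b : ↥B, ∃ P Q : Set X, IsClosed P ∧ IsUpperSet P ∧ P ∈ 𝓝 a ∧
        IsClosed Q ∧ IsLowerSet Q ∧ Q ∈ 𝓝 (b : X) ∧ Disjoint P Q := by
      rintro ⟨b, hbB⟩
      have hnle : ¬ a ≤ b := fun hle => (Set.disjoint_left.1 hd) (hAu hle haA) hbB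
      exact point_sep hnle
    choose P Q hPc hPu hPn hQc hQl hQn hPQ using hsep
    have hcovB : B ⊆ ⋃ b : ↥B, interior (Q b) := by
      intro b hb
      exact Set.mem_iUnion.2 ⟨⟨b, hb⟩, mem_interior_iff_mem_nhds.2 (hQn ⟨b, hb⟩)⟩
    obtain ⟨t, htcov⟩ := (hB.isCompact).elim_finite_subcover (fun b : ↥B => interior (Q b))
      (fun b => isOpen_interior) hcovB
    refine ⟨⋂ b ∈ t, P b, ⋃ b ∈ t, Q b, ?_, ?_, ?_, ?_, ?_, ?_, ?_⟩
    · exact isClosed_biInter fun b _ => hPc b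
    · exact fun u v huv hu => Set.mem_iInter₂.2 fun b hb => hPu b huv (Set.mem_iInter₂.1 hu b hb)
    · exact (Filter.biInter_mem t.finite_toSet).2 fun b _ => hPn b
    · exact t.finite_toSet.isClosed_biUnion fun b _ => hQc b
    · exact fun u v huv hu => by
        obtain ⟨b, hb, hub⟩ := Set.mem_iUnion₂.1 hu
        exact Set.mem_iUnion₂.2 ⟨b, hb, hQl b huv hub⟩
    · intro b hb
      obtain ⟨c, hct⟩ := Set.mem_iUnion₂.1 (htcov hb)
      obtain ⟨hc, hbint⟩ := hct
      exact interior_mono (Set.subset_biUnion_of_mem hc) hbint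
    · rw [Set.disjoint_left]
      intro z hz hzU
      obtain ⟨b, hb, hzb⟩ := Set.mem_iUnion₂.1 hzU
      exact (Set.disjoint_left.1 (hPQ b)) (Set.mem_iInter₂.1 hz b hb) hzb
  -- Step 2: cover A
  have hsep2 : ∀ a : ↥A, ∃ P Q : Set X, IsClosed P ∧ IsUpperSet P ∧ P ∈ 𝓝 (a : X) ∧
      IsClosed Q ∧ IsLowerSet Q ∧ B ⊆ interior Q ∧ Disjoint P Q :=
    fun a => step1 a a.2
  choose P Q hPc hPu hPn hQc hQl hQn hPQ using hsep2
  have hcovA : A ⊆ ⋃ a : ↥A, interior (P a) := by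
    intro a ha
    exact Set.mem_iUnion.2 ⟨⟨a, ha⟩, mem_interior_iff_mem_nhds.2 (hPn ⟨a, ha⟩)⟩
  obtain ⟨s, hscov⟩ := (hA.isCompact).elim_finite_subcover (fun a : ↥A => interior (P a))
    (fun a => isOpen_interior) hcovA
  refine ⟨⋃ a ∈ s, P a, ⋂ a ∈ s, Q a, ?_, ?_, ?_, ?_, ?_, ?_, ?_⟩
  · exact s.finite_toSet.isClosed_biUnion fun a _ => hPc a
  · exact fun u v huv hu => by
      obtain ⟨a, ha, hua⟩ := Set.mem_iUnion₂.1 hu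
      exact Set.mem_iUnion₂.2 ⟨a, ha, hPu a huv hua⟩
  · intro a ha
    obtain ⟨c, hc, haint⟩ := Set.mem_iUnion₂.1 (hscov ha)
    exact interior_mono (Set.subset_biUnion_of_mem hc) haint
  · exact isClosed_biInter fun a _ => hQc a
  · exact fun u v huv hu => Set.mem_iInter₂.2 fun a ha => hQl a huv (Set.mem_iInter₂.1 hu a ha)
  · intro b hb
    rw [mem_interior_iff_mem_nhds]
    exact (Filter.biInter_mem s.finite_toSet).2 fun a _ =>
      mem_interior_iff_mem_nhds.1 (hQn a hb)
  · rw [Set.disjoint_left]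
    intro z hz hzQ
    obtain ⟨a, ha, hza⟩ := Set.mem_iUnion₂.1 hz
    exact (Set.disjoint_left.1 (hPQ a)) hza (Set.mem_iInter₂.1 hzQ a ha)


lemma urysohn_mono {A B : Set X} (hA : IsClosed A) (hAu : IsUpperSet A)
    (hB : IsClosed B) (hBl : IsLowerSet B) (hd : Disjoint A B) :
    ∃ g : X → ℝ, Continuous g ∧ Monotone g ∧ (∀ z, 0 ≤ g z) ∧ (∀ z, g z ≤ 1) ∧
      (∀ z ∈ A, g z = 1) ∧ (∀ z ∈ B, g z = 0) := by
  -- top level set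
  obtain ⟨P₀, Q₀, hP₀c, hP₀u, hAP₀, hQ₀c, hQ₀l, hBQ₀, hPQ₀⟩ := order_normal hA hAu hB hBl hd
  have hP₀B : Disjoint P₀ B := hPQ₀.mono_right (hBQ₀.trans interior_subset)
  -- interpolation operator
  have interp : ∀ U V : Set X, ∃ P : Set X,
      (IsClosed U ∧ IsUpperSet U ∧ IsClosed V ∧ IsUpperSet V ∧ V ⊆ interior U ∧ Disjoint V B) →
      (IsClosed P ∧ IsUpperSet P ∧ V ⊆ interior P ∧ P ⊆ interior U ∧ Disjoint P B) := by
    intro U V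
    by_cases hyp : IsClosed U ∧ IsUpperSet U ∧ IsClosed V ∧ IsUpperSet V ∧
        V ⊆ interior U ∧ Disjoint V B
    · obtain ⟨hUc, hUu, hVc, hVu, hVU, hVB⟩ := hyp
      set B' : Set X := {z : X | ∃ w ∈ (interior U)ᶜ, z ≤ w} ∪ B with hB'def
      have hB'c : IsClosed B' := (dnClosure_closed isOpen_interior.isClosed_compl).union hB
      have hB'l : IsLowerSet B' := (dnClosure_lower _).union hBl
      have hVB' : Disjoint V B' := by
        rw [Set.disjoint_union_right]
        refine ⟨?_, hVB⟩
        rw [Set.disjoint_left]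
        rintro z hzV ⟨w, hw, hzw⟩
        exact hw (hVU (hVu hzw hzV))
      obtain ⟨P, Q, hPc, hPu, hVP, hQc, hQl, hB'Q, hPQ⟩ := order_normal hVc hVu hB'c hB'l hVB'
      refine ⟨P, fun _ => ⟨hPc, hPu, hVP, ?_, ?_⟩⟩
      · intro z hz
        by_contra hzU
        have hzB' : z ∈ B' := Or.inl ⟨z, hzU, le_rfl⟩
        exact (Set.disjoint_left.1 hPQ) hz (hB'Q.trans interior_subset hzB')
      · exact hPQ.mono_right ((Set.subset_union_right).trans (hB'Q.trans interior_subset))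
    · exact ⟨∅, fun h => absurd h hyp⟩
  choose mid hmid using interp
  -- the dyadic family
  obtain ⟨T, hT0, hTs⟩ : ∃ T : ℕ → ℕ → Set X,
      (∀ k, T 0 k = if k = 0 then (univ : Set X) else P₀) ∧
      (∀ n k, T (n+1) k = if k % 2 = 0 then T n (k / 2) else mid (T n (k / 2)) (T n (k / 2 + 1))) :=
    ⟨fun n => Nat.rec (fun k => if k = 0 then (univ : Set X) else P₀)
      (fun _ Tn k => if k % 2 = 0 then Tn (k / 2) else mid (Tn (k / 2)) (Tn (k / 2 + 1))) n,
     fun _ => rfl, fun _ _ => rfl⟩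
  -- invariant
  have hInv : ∀ n, ∀ k, k ≤ 2^n → (IsClosed (T n k) ∧ IsUpperSet (T n k) ∧
      (0 < k → (Disjoint (T n k) B ∧ A ⊆ interior (T n k))) ∧
      (∀ l, l ≤ 2^n → k < l → T n l ⊆ interior (T n k))) := by
    intro n
    induction n with
    | zero =>
      intro k hk
      interval_cases k
      · rw [hT0]
        refine ⟨by simp, by simp [isUpperSet_univ], by omega, ?_⟩
        intro l hl hkl
        have : l = 1 := by omega
        subst this
        rw [hT0]
        simp
      · rw [hT0]
        refine ⟨by simpa using hP₀c, by simpa using hP₀u, fun _ => by simpa using ⟨hP₀B, hAP₀⟩, ?_⟩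
        intro l hl hkl
        omega
    | succ n ih =>
      have h2 : 2^(n+1) = 2 * 2^n := by rw [pow_succ]; ring
      -- spec for odd indices
      have hspec : ∀ j, j % 2 ≠ 0 → j ≤ 2^(n+1) →
          IsClosed (T (n+1) j) ∧ IsUpperSet (T (n+1) j) ∧
          (T n (j/2+1) ⊆ interior (T (n+1) j)) ∧ (T (n+1) j ⊆ interior (T n (j/2))) ∧
          Disjoint (T (n+1) j) B := by
        intro j hj hjle
        have h1 : j/2 + 1 ≤ 2^n := by omega
        have h2' : j/2 ≤ 2^n := by omega
        obtain ⟨u1, u2, u3, u4⟩ := ih (j/2) h2'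
        obtain ⟨v1, v2, v3, v4⟩ := ih (j/2+1) h1
        have hVU : T n (j/2+1) ⊆ interior (T n (j/2)) := u4 _ h1 (Nat.lt_succ_self _)
        have hs := hmid (T n (j/2)) (T n (j/2+1))
          ⟨u1, u2, v1, v2, hVU, (v3 (Nat.succ_pos _)).1⟩
        have hTj : T (n+1) j = mid (T n (j/2)) (T n (j/2+1)) := by rw [hTs, if_neg hj]
        rw [hTj]
        exact ⟨hs.1, hs.2.1, hs.2.2.1, hs.2.2.2.1, hs.2.2.2.2⟩
      intro k hk
      by_cases hke : k % 2 = 0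
      · have hTk : T (n+1) k = T n (k/2) := by rw [hTs, if_pos hke]
        have hk2 : k/2 ≤ 2^n := by omega
        obtain ⟨c1, c2, c3, c4⟩ := ih (k/2) hk2
        rw [hTk]
        refine ⟨c1, c2, fun hk0 => c3 (by omega), ?_⟩
        intro l hl hkl
        by_cases hle : l % 2 = 0
        · have hTl : T (n+1) l = T n (l/2) := by rw [hTs, if_pos hle]
          rw [hTl]
          exact c4 (l/2) (by omega) (by omega)
        · obtain ⟨-, -, -, hs4, -⟩ := hspec l hle hl
          by_cases heq : k/2 = l/2
          · rw [heq]; exact hs4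
          · have hlt : k/2 < l/2 := by omega
            exact hs4.trans (interior_subset.trans (fun z hz =>
              c4 (l/2) (by omega) hlt hz))
      · obtain ⟨s1, s2, s3, s4, s5⟩ := hspec k hke hk
        have h1 : k/2 + 1 ≤ 2^n := by omega
        obtain ⟨v1, v2, v3, v4⟩ := ih (k/2+1) h1
        refine ⟨s1, s2, fun _ => ⟨s5, ?_⟩, ?_⟩
        · exact ((v3 (Nat.succ_pos _)).2).trans (interior_subset.trans s3)
        · intro l hl hkl
          have hll : k/2 + 1 ≤ l/2 := by omega
          by_cases hle : l % 2 = 0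
          · have hTl : T (n+1) l = T n (l/2) := by rw [hTs, if_pos hle]
            rw [hTl]
            rcases eq_or_lt_of_le hll with heq | hlt
            · rw [← heq]; exact s3
            · exact fun z hz => s3 (interior_subset (v4 (l/2) (by omega) hlt hz))
          · obtain ⟨-, -, -, t4, -⟩ := hspec l hle hl
            have hll2 : k/2+1 ≤ l/2 := by omega
            rcases eq_or_lt_of_le hll2 with heq | hlt
            · exact t4.trans (interior_subset.trans (by rw [← heq]; exact s3))
            · exact t4.trans (interior_subset.trans (fun z hz =>
                s3 (interior_subset (v4 (l/2) (by omega) hlt hz))))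
  -- doubling / lifting
  have hdouble : ∀ n k, T (n+1) (2*k) = T n k := by
    intro n k
    rw [hTs]
    have h1 : (2*k) % 2 = 0 := by omega
    have h2 : (2*k) / 2 = k := by omega
    rw [if_pos h1, h2]
  have hlift : ∀ m n k, T n k = T (n+m) (k * 2^m) := by
    intro m
    induction m with
    | zero => intro n k; simp
    | succ m ihm =>
      intro n k
      have : k * 2^(m+1) = 2 * (k * 2^m) := by ring
      rw [this]
      have hadd : n + (m+1) = (n + m) + 1 := by omega
      rw [hadd, hdouble (n+m) (k * 2^m), ← ihm n k]
  -- cross-level comparison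
  have hcompare : ∀ (m j n k : ℕ), j ≤ 2^m → k ≤ 2^n → (k:ℝ)/2^n < (j:ℝ)/2^m →
      T m j ⊆ interior (T n k) := by
    intro m j n k hj hk hlt
    set N := max m n with hN
    have hmN : m ≤ N := le_max_left _ _
    have hnN : n ≤ N := le_max_right _ _
    have hmN' : m + (N - m) = N := by omega
    have hnN' : n + (N - n) = N := by omega
    have hTm : T m j = T N (j * 2^(N-m)) := by rw [hlift (N-m) m j, hmN']
    have hTn : T n k = T N (k * 2^(N-n)) := by rw [hlift (N-n) n k, hnN']
    have h2n : (0:ℝ) < 2^n := by positivity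
    have h2m : (0:ℝ) < 2^m := by positivity
    have hlt' : (k:ℝ) * 2^m < (j:ℝ) * 2^n := (div_lt_div_iff₀ h2n h2m).1 hlt
    have hN1 : (2:ℝ)^(N-n) * 2^n = 2^N := by rw [← pow_add]; congr 1; omega
    have hN2 : (2:ℝ)^(N-m) * 2^m = 2^N := by rw [← pow_add]; congr 1; omega
    have key : (k:ℝ) * 2^(N-n) * (2^n * 2^m) < (j:ℝ) * 2^(N-m) * (2^n * 2^m) := by
      calc (k:ℝ) * 2^(N-n) * (2^n * 2^m) = (k * 2^m) * (2^(N-n) * 2^n) := by ring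
      _ = (k * 2^m) * 2^N := by rw [hN1]
      _ < (j * 2^n) * 2^N := by
          apply mul_lt_mul_of_pos_right hlt' (by positivity)
      _ = (j:ℝ) * 2^(N-m) * (2^n * 2^m) := by rw [← hN2]; ring
    have hlt2 : (k:ℝ) * 2^(N-n) < (j:ℝ) * 2^(N-m) :=
      lt_of_mul_lt_mul_right key (by positivity)
    have hltN : k * 2^(N-n) < j * 2^(N-m) := by exact_mod_cast hlt2
    have hjN : j * 2^(N-m) ≤ 2^N := by
      calc j * 2^(N-m) ≤ 2^m * 2^(N-m) := Nat.mul_le_mul hj (le_refl _)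
      _ = 2^N := by rw [← pow_add, hmN']
    have hchain := (hInv N (k * 2^(N-n)) (le_trans (Nat.le_of_lt hltN) hjN)).2.2.2
    rw [hTm, hTn]
    exact hchain (j * 2^(N-m)) hjN hltN
  -- the function
  set gs : X → Set ℝ := fun z =>
    insert 0 {r | ∃ n k : ℕ, 0 < k ∧ k ≤ 2^n ∧ z ∈ T n k ∧ r = (k:ℝ)/2^n} with hgs
  have hgs_ne : ∀ z, (gs z).Nonempty := fun z => ⟨0, Set.mem_insert _ _⟩
  have hgs_le1 : ∀ z, ∀ r ∈ gs z, r ≤ 1 := by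
    rintro z r (rfl | ⟨n, k, hk0, hkn, hzT, rfl⟩)
    · norm_num
    · rw [div_le_one (by positivity)]
      exact_mod_cast hkn
  have hgs_nn : ∀ z, ∀ r ∈ gs z, 0 ≤ r := by
    rintro z r (rfl | ⟨n, k, hk0, hkn, hzT, rfl⟩)
    · exact le_refl 0
    · positivity
  have hgs_bdd : ∀ z, BddAbove (gs z) := fun z => ⟨1, fun r hr => hgs_le1 z r hr⟩
  set g : X → ℝ := fun z => sSup (gs z) with hgdef
  have hg0 : ∀ z, 0 ≤ g z := fun z => le_csSup (hgs_bdd z) (Set.mem_insert _ _)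
  have hg1 : ∀ z, g z ≤ 1 := fun z => csSup_le (hgs_ne z) (hgs_le1 z)
  have hmono : Monotone g := by
    intro z z' hzz
    apply csSup_le_csSup (hgs_bdd z') (hgs_ne z)
    rintro r (rfl | ⟨n, k, hk0, hkn, hzT, rfl⟩)
    · exact Set.mem_insert _ _
    · exact Set.mem_insert_of_mem _ ⟨n, k, hk0, hkn, (hInv n k hkn).2.1 hzz hzT, rfl⟩
  have hgA : ∀ z ∈ A, g z = 1 := by
    intro z hz
    refine le_antisymm (hg1 z) ?_
    have h1 : (1:ℝ) ∈ gs z := by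
      refine Set.mem_insert_of_mem _ ⟨0, 1, one_pos, le_refl _, ?_, by norm_num⟩
      rw [hT0]
      simpa using interior_subset (hAP₀ hz)
    exact le_csSup (hgs_bdd z) h1
  have hgB : ∀ z ∈ B, g z = 0 := by
    intro z hz
    refine le_antisymm ?_ (hg0 z)
    apply csSup_le (hgs_ne z)
    rintro r (rfl | ⟨n, k, hk0, hkn, hzT, rfl⟩)
    · exact le_refl 0
    · exact absurd hz (Set.disjoint_left.1 ((hInv n k hkn).2.2.1 hk0).1 hzT)
  have hcont : Continuous g := by
    rw [continuous_iff_continuousAt]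
    intro z
    unfold ContinuousAt
    apply tendsto_order.2
    constructor
    · intro a ha
      obtain ⟨r, hr, har⟩ := exists_lt_of_lt_csSup (hgs_ne z) ha
      rcases hr with rfl | ⟨n, k, hk0, hkn, hzT, rfl⟩
      · exact Filter.Eventually.of_forall fun w => lt_of_lt_of_le har (hg0 w)
      · by_cases h0a : a < 0
        · exact Filter.Eventually.of_forall fun w => lt_of_lt_of_le h0a (hg0 w)
        · push_neg at h0a
          obtain ⟨n', k', hk'0, hak', hk'r⟩ := exists_dyadic_btwn h0a har
          have hk'le : k' ≤ 2^n' := by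
            have : (k':ℝ)/2^n' ≤ 1 := le_of_lt (lt_of_lt_of_le hk'r (by
              rw [div_le_one (by positivity)]; exact_mod_cast hkn))
            rw [div_le_one (by positivity)] at this
            exact_mod_cast this
          have hmemint : z ∈ interior (T n' k') := hcompare n k n' k' hkn hk'le hk'r hzT
          filter_upwards [isOpen_interior.mem_nhds hmemint] with w hw
          have : (k':ℝ)/2^n' ∈ gs w :=
            Set.mem_insert_of_mem _ ⟨n', k', hk'0, hk'le, interior_subset hw, rfl⟩
          exact lt_of_lt_of_le hak' (le_csSup (hgs_bdd w) this)
    · intro a ha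
      by_cases h1a : 1 < a
      · exact Filter.Eventually.of_forall fun w => lt_of_le_of_lt (hg1 w) h1a
      · push_neg at h1a
        obtain ⟨n, k, hk0, hgk, hka⟩ := exists_dyadic_btwn (hg0 z) ha
        have hkle : k ≤ 2^n := by
          have : (k:ℝ)/2^n ≤ 1 := le_of_lt (lt_of_lt_of_le hka h1a)
          rw [div_le_one (by positivity)] at this
          exact_mod_cast this
        have hzT : z ∉ T n k := by
          intro hmem
          exact absurd (le_csSup (hgs_bdd z)
            (Set.mem_insert_of_mem _ ⟨n, k, hk0, hkle, hmem, rfl⟩)) (not_le.2 hgk)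
        filter_upwards [((hInv n k hkle).1.isOpen_compl).mem_nhds hzT] with w hw
        have hle : g w ≤ (k:ℝ)/2^n := by
          apply csSup_le (hgs_ne w)
          rintro r (rfl | ⟨m, j, hj0, hjm, hwT, rfl⟩)
          · positivity
          · by_contra hgt
            push_neg at hgt
            exact hw (interior_subset (hcompare m j n k hjm hkle hgt hwT))
        exact lt_of_le_of_lt hle hka
  exact ⟨g, hcont, hmono, hg0, hg1, hgA, hgB⟩


/-- Monotone continuous functions separate points in a compact ordered space. -/
lemma monotone_separates {x y : X} (hxy : x ≠ y) :
    ∃ f : C(X, ℝ), Monotone ⇑f ∧ f x ≠ f y := by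
  have hcase : ¬ x ≤ y ∨ ¬ y ≤ x := by
    by_contra hc
    push_neg at hc
    exact hxy (le_antisymm hc.1 hc.2)
  have key : ∀ u v : X, ¬ u ≤ v → ∃ f : C(X, ℝ), Monotone ⇑f ∧ f u = 1 ∧ f v = 0 := by
    intro u v huv
    have hAc : IsClosed {z : X | u ≤ z} := by
      have : {z : X | u ≤ z} = (fun z => (u, z)) ⁻¹' {p : X × X | p.1 ≤ p.2} := rfl
      rw [this]
      exact OrderClosedTopology.isClosed_le'.preimage (continuous_const.prodMk continuous_id)
    have hBc : IsClosed {z : X | z ≤ v} := by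
      have : {z : X | z ≤ v} = (fun z => (z, v)) ⁻¹' {p : X × X | p.1 ≤ p.2} := rfl
      rw [this]
      exact OrderClosedTopology.isClosed_le'.preimage (continuous_id.prodMk continuous_const)
    have hd : Disjoint {z : X | u ≤ z} {z : X | z ≤ v} := by
      rw [Set.disjoint_left]
      intro z hz1 hz2
      exact huv (le_trans hz1 hz2)
    obtain ⟨g, hgc, hgm, -, -, hgA, hgB⟩ := urysohn_mono hAc
      (fun a b hab ha => le_trans ha hab) hBc (fun a b hab ha => le_trans hab ha) hd
    exact ⟨⟨g, hgc⟩, hgm, hgA u le_rfl, hgB v le_rfl⟩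
  rcases hcase with h | h
  · obtain ⟨f, hf, h1, h0⟩ := key x y h
    exact ⟨f, hf, by rw [h1, h0]; norm_num⟩
  · obtain ⟨f, hf, h1, h0⟩ := key y x h
    exact ⟨f, hf, by rw [h0, h1]; norm_num⟩

/-- Stone–Weierstrass: approximation by differences of monotone continuous functions. -/
lemma sw_monotone_approx (h : C(X, ℝ)) {ε : ℝ} (hε : 0 < ε) :
    ∃ g₁ g₂ : C(X, ℝ), Monotone ⇑g₁ ∧ Monotone ⇑g₂ ∧
      ∀ x : X, |h x - (g₁ x - g₂ x)| ≤ ε := by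
  set A : Subalgebra ℝ C(X, ℝ) := Algebra.adjoin ℝ {f : C(X, ℝ) | Monotone ⇑f} with hA
  have hsep : A.SeparatesPoints := by
    intro x y hxy
    obtain ⟨f, hfm, hfxy⟩ := monotone_separates hxy
    exact ⟨f, ⟨f, Algebra.subset_adjoin hfm, rfl⟩, hfxy⟩
  obtain ⟨⟨gc, hgcA⟩, hnorm⟩ :=
    ContinuousMap.exists_mem_subalgebra_near_continuousMap_of_separatesPoints A hsep h ε hε
  have hdec : ∀ f ∈ A, ∃ g₁ g₂ : C(X, ℝ), Monotone ⇑g₁ ∧ Monotone ⇑g₂ ∧ f = g₁ - g₂ := by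
    intro f hf
    induction hf using Algebra.adjoin_induction with
    | mem f hfm => exact ⟨f, 0, hfm, monotone_const, by simp⟩
    | algebraMap r =>
      refine ⟨ContinuousMap.const X r, 0, monotone_const, monotone_const, ?_⟩
      ext x; simp [Algebra.algebraMap_eq_smul_one]
    | add f f' hfa hfa' ihf ihf' =>
      obtain ⟨g₁, g₂, hm1, hm2, rfl⟩ := ihf
      obtain ⟨k₁, k₂, hm3, hm4, rfl⟩ := ihf'
      refine ⟨g₁ + k₁, g₂ + k₂, ?_, ?_, ?_⟩
      · intro a b hab
        simp only [ContinuousMap.add_apply]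
        exact add_le_add (hm1 hab) (hm3 hab)
      · intro a b hab
        simp only [ContinuousMap.add_apply]
        exact add_le_add (hm2 hab) (hm4 hab)
      · ext x; simp; ring
    | mul f f' hfa hfa' ihf ihf' =>
      obtain ⟨g₁, g₂, hm1, hm2, rfl⟩ := ihf
      obtain ⟨k₁, k₂, hm3, hm4, rfl⟩ := ihf'
      set c : ℝ := ‖g₁‖ + ‖g₂‖ with hc
      set d : ℝ := ‖k₁‖ + ‖k₂‖ with hd
      have hg₁c : ∀ x, 0 ≤ g₁ x + c := fun x => by
        have := (abs_le.1 (g₁.norm_coe_le_norm x)).1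
        have h2 : (0:ℝ) ≤ ‖g₂‖ := norm_nonneg _
        simp only [hc]; linarith
      have hg₂c : ∀ x, 0 ≤ g₂ x + c := fun x => by
        have := (abs_le.1 (g₂.norm_coe_le_norm x)).1
        have h2 : (0:ℝ) ≤ ‖g₁‖ := norm_nonneg _
        simp only [hc]; linarith
      have hk₁d : ∀ x, 0 ≤ k₁ x + d := fun x => by
        have := (abs_le.1 (k₁.norm_coe_le_norm x)).1
        have h2 : (0:ℝ) ≤ ‖k₂‖ := norm_nonneg _
        simp only [hd]; linarith
      have hk₂d : ∀ x, 0 ≤ k₂ x + d := fun x => by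
        have := (abs_le.1 (k₂.norm_coe_le_norm x)).1
        have h2 : (0:ℝ) ≤ ‖k₁‖ := norm_nonneg _
        simp only [hd]; linarith
      have hmul : ∀ (p q : C(X,ℝ)), Monotone ⇑p → Monotone ⇑q →
          (∀ x, 0 ≤ p x) → (∀ x, 0 ≤ q x) → Monotone ⇑(p * q) := by
        intro p q hp hq hp0 hq0 a b hab
        simp only [ContinuousMap.mul_apply]
        exact mul_le_mul (hp hab) (hq hab) (hq0 a) (le_trans (hp0 a) (hp hab))
      set cc : C(X,ℝ) := ContinuousMap.const X c
      set dd : C(X,ℝ) := ContinuousMap.const X d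
      have hmg₁ : Monotone ⇑(g₁ + cc) := fun a b hab => by
        simp only [ContinuousMap.add_apply]; exact add_le_add (hm1 hab) le_rfl
      have hmg₂ : Monotone ⇑(g₂ + cc) := fun a b hab => by
        simp only [ContinuousMap.add_apply]; exact add_le_add (hm2 hab) le_rfl
      have hmk₁ : Monotone ⇑(k₁ + dd) := fun a b hab => by
        simp only [ContinuousMap.add_apply]; exact add_le_add (hm3 hab) le_rfl
      have hmk₂ : Monotone ⇑(k₂ + dd) := fun a b hab => by
        simp only [ContinuousMap.add_apply]; exact add_le_add (hm4 hab) le_rfl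
      refine ⟨(g₁ + cc) * (k₁ + dd) + (g₂ + cc) * (k₂ + dd),
        (g₁ + cc) * (k₂ + dd) + (g₂ + cc) * (k₁ + dd), ?_, ?_, ?_⟩
      · intro a b hab
        simp only [ContinuousMap.add_apply]
        exact add_le_add (hmul _ _ hmg₁ hmk₁ hg₁c hk₁d hab) (hmul _ _ hmg₂ hmk₂ hg₂c hk₂d hab)
      · intro a b hab
        simp only [ContinuousMap.add_apply]
        exact add_le_add (hmul _ _ hmg₁ hmk₂ hg₁c hk₂d hab) (hmul _ _ hmg₂ hmk₁ hg₂c hk₁d hab)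
      · ext x
        simp only [ContinuousMap.sub_apply, ContinuousMap.mul_apply, ContinuousMap.add_apply,
          ContinuousMap.const_apply]
        ring
  obtain ⟨g₁, g₂, hm1, hm2, hgc⟩ := hdec gc hgcA
  refine ⟨g₁, g₂, hm1, hm2, ?_⟩
  intro x
  have : |h x - (g₁ x - g₂ x)| = |(h - gc) x| := by
    rw [hgc]; simp [ContinuousMap.sub_apply]
  rw [this]
  calc |(h - gc) x| ≤ ‖h - gc‖ := (h - gc).norm_coe_le_norm x
  _ = ‖gc - h‖ := norm_sub_rev _ _
  _ ≤ ε := le_of_lt hnorm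

end OrderSep

end OrderSep

section Alpha
variable {α : Type*} [MeasurableSpace α] [Preorder α]

lemma ocp_set_nonempty (μ ν : Measure α) :
    {r : ℝ | ∃ μ' ν' : Measure α, IsOCP μ ν μ' ν' ∧ r = (μ' Set.univ).toReal}.Nonempty := by
  refine ⟨0, 0, 0, ⟨Measure.zero_le μ, Measure.zero_le ν, ?_, ?_⟩, by simp⟩
  · simp
  · intro I _ _; exact le_rfl

lemma alphaO_le_one (μ ν : Measure α) [IsProbabilityMeasure μ] : alphaO μ ν ≤ 1 := by
  apply Real.sSup_le
  · rintro r ⟨μ', ν', ⟨hμ', -, -⟩, rfl⟩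
    rw [← ENNReal.toReal_one]
    apply ENNReal.toReal_mono ENNReal.one_ne_top
    calc μ' Set.univ ≤ μ Set.univ := Measure.le_iff'.1 hμ' _
    _ = 1 := measure_univ
  · norm_num

lemma measure_toReal_le_of_alphaO (μ ν : Measure α) [IsProbabilityMeasure μ]
    [IsProbabilityMeasure ν] {I : Set α} (hI : MeasurableSet I) (hU : IsUpperSet I) :
    (μ I).toReal ≤ (ν I).toReal + (1 - alphaO μ ν) := by
  apply le_of_forall_pos_le_add
  intro η hη
  have hlt : alphaO μ ν - η < alphaO μ ν := by linarith
  obtain ⟨r, ⟨μ', ν', ⟨hμ'le, hν'le, hmass, hdom⟩, rfl⟩, hgt⟩ :=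
    exists_lt_of_lt_csSup (ocp_set_nonempty μ ν) hlt
  -- finiteness facts
  have hμ'fin : ∀ s, μ' s ≠ ⊤ := fun s =>
    ne_top_of_le_ne_top (measure_ne_top μ s) (Measure.le_iff'.1 hμ'le s)
  have hν'fin : ∀ s, ν' s ≠ ⊤ := fun s =>
    ne_top_of_le_ne_top (measure_ne_top ν s) (Measure.le_iff'.1 hν'le s)
  have e1 : (μ I).toReal + (μ Iᶜ).toReal = 1 := by
    rw [← ENNReal.toReal_add (measure_ne_top μ I) (measure_ne_top μ Iᶜ),
      measure_add_measure_compl hI, measure_univ, ENNReal.toReal_one]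
  have e2 : (μ' I).toReal + (μ' Iᶜ).toReal = (μ' Set.univ).toReal := by
    rw [← ENNReal.toReal_add (hμ'fin I) (hμ'fin Iᶜ), measure_add_measure_compl hI]
  have e3 : (μ' Iᶜ).toReal ≤ (μ Iᶜ).toReal :=
    ENNReal.toReal_mono (measure_ne_top μ Iᶜ) (Measure.le_iff'.1 hμ'le Iᶜ)
  have e4 : (μ' I).toReal ≤ (ν' I).toReal :=
    ENNReal.toReal_mono (hν'fin I) (hdom I hI hU)
  have e5 : (ν' I).toReal ≤ (ν I).toReal :=
    ENNReal.toReal_mono (measure_ne_top ν I) (Measure.le_iff'.1 hν'le I)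
  linarith
end Alpha

section SetBound
variable {S : Type*} [MeasurableSpace S] [PartialOrder S]

lemma abs_sub_le_gammaO (μ ν : Measure S) [IsProbabilityMeasure μ] [IsProbabilityMeasure ν]
    {I : Set S} (hI : MeasurableSet I) (hU : IsUpperSet I) :
    |(μ I).toReal - (ν I).toReal| ≤ gammaO μ ν := by
  have h1 := measure_toReal_le_of_alphaO μ ν hI hU
  have h2 := measure_toReal_le_of_alphaO ν μ hI hU
  have ha := alphaO_le_one μ ν
  have hb := alphaO_le_one ν μ
  rw [gammaO]
  rw [abs_sub_le_iff]
  constructor <;> linarith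

lemma gammaO_nonneg (μ ν : Measure S) [IsProbabilityMeasure μ] [IsProbabilityMeasure ν] :
    0 ≤ gammaO μ ν := by
  have ha := alphaO_le_one μ ν
  have hb := alphaO_le_one ν μ
  rw [gammaO]; linarith
end SetBound


section Ambient
variable {S : Type*} [TopologicalSpace S] [PolishSpace S] [MeasurableSpace S]
  [BorelSpace S] [PartialOrder S] [OrderClosedTopology S] [Nonempty S]

lemma upClosureS_closed {C : Set S} (hC : IsCompact C) :
    IsClosed {z : S | ∃ w ∈ C, w ≤ z} := by
  letI := TopologicalSpace.upgradeIsCompletelyMetrizable S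
  apply IsSeqClosed.isClosed
  intro x z hx hz
  choose w hwC hwx using hx
  obtain ⟨a, haC, φ, hφ, hφa⟩ := hC.tendsto_subseq hwC
  refine ⟨a, haC, ?_⟩
  have hpair : Tendsto (fun n => (w (φ n), x (φ n))) atTop (𝓝 (a, z)) :=
    hφa.prodMk_nhds (hz.comp hφ.tendsto_atTop)
  have := OrderClosedTopology.isClosed_le' (α := S)
  exact this.mem_of_tendsto hpair (Filter.Eventually.of_forall fun n => hwx (φ n))

lemma upClosureS_upper (C : Set S) : IsUpperSet {z : S | ∃ w ∈ C, w ≤ z} := by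
  rintro a b hab ⟨w, hw, hwa⟩; exact ⟨w, hw, hwa.trans hab⟩

-- order-closedness of subtype
lemma subtype_orderClosed (K : Set S) : OrderClosedTopology (↥K) := by
  constructor
  have : {p : ↥K × ↥K | p.1 ≤ p.2} =
      (fun p : ↥K × ↥K => ((p.1 : S), (p.2 : S))) ⁻¹' {q : S × S | q.1 ≤ q.2} := rfl
  rw [this]
  exact OrderClosedTopology.isClosed_le'.preimage
    ((continuous_subtype_val.comp continuous_fst).prodMk
      (continuous_subtype_val.comp continuous_snd))

/-- Monotone measurable extension of a monotone continuous function on a compact set. -/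
lemma mono_extension {K : Set S} (hK : IsCompact K) (g : C(↥K, ℝ)) (hg : Monotone ⇑g)
    {M : ℝ} (hM0 : 0 ≤ M) (hM : ∀ x : ↥K, |g x| ≤ M) :
    ∃ G : S → ℝ, Measurable G ∧ Monotone G ∧ (∀ z, -M ≤ G z) ∧ (∀ z, G z ≤ M) ∧
      (∀ x : ↥K, G (x : S) = g x) := by
  haveI : CompactSpace ↥K := isCompact_iff_compactSpace.mp hK
  set G : S → ℝ := fun z => sSup (insert (-M) (⇑g '' {w : ↥K | (w : S) ≤ z})) with hGdef
  have hbdd : ∀ z, BddAbove (insert (-M) (⇑g '' {w : ↥K | (w : S) ≤ z})) := by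
    intro z
    refine ⟨M, ?_⟩
    rintro r (rfl | ⟨w, hw, rfl⟩)
    · linarith [hM0]
    · exact (abs_le.1 (hM w)).2
  have hne : ∀ z, (insert (-M) (⇑g '' {w : ↥K | (w : S) ≤ z})).Nonempty :=
    fun z => ⟨-M, Set.mem_insert _ _⟩
  have hWclosed : ∀ z : S, IsClosed {w : ↥K | (w : S) ≤ z} := by
    intro z
    have : {w : ↥K | (w : S) ≤ z} = (fun w : ↥K => ((w : S), z)) ⁻¹' {q : S × S | q.1 ≤ q.2} := rfl
    rw [this]
    exact OrderClosedTopology.isClosed_le'.preimage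
      (continuous_subtype_val.prodMk continuous_const)
  have hlb : ∀ z, -M ≤ G z := fun z => le_csSup (hbdd z) (Set.mem_insert _ _)
  have hub : ∀ z, G z ≤ M := by
    intro z
    apply csSup_le (hne z)
    rintro r (rfl | ⟨w, hw, rfl⟩)
    · linarith [hM0]
    · exact (abs_le.1 (hM w)).2
  have hmono : Monotone G := by
    intro z z' hzz
    apply csSup_le_csSup (hbdd z') (hne z)
    rintro r (rfl | ⟨w, hw, rfl⟩)
    · exact Set.mem_insert _ _
    · exact Set.mem_insert_of_mem _ ⟨w, le_trans hw hzz, rfl⟩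
  have hKval : ∀ x : ↥K, G (x : S) = g x := by
    intro x
    apply le_antisymm
    · apply csSup_le (hne _)
      rintro r (rfl | ⟨w, hw, rfl⟩)
      · exact (abs_le.1 (hM x)).1
      · exact hg hw
    · exact le_csSup (hbdd _) (Set.mem_insert_of_mem _ ⟨x, le_rfl, rfl⟩)
  -- level sets
  have hlevel : ∀ t : ℝ, -M < t →
      {z : S | t ≤ G z} = {z : S | ∃ w ∈ Subtype.val '' {w : ↥K | t ≤ g w}, w ≤ z} := by
    intro t ht
    ext z
    simp only [Set.mem_setOf_eq]
    constructor
    · intro hz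
      by_cases hW : {w : ↥K | (w : S) ≤ z}.Nonempty
      · have hWc : IsCompact {w : ↥K | (w : S) ≤ z} := (hWclosed z).isCompact
        obtain ⟨w₀, hw₀, hw₀max'⟩ := hWc.exists_isMaxOn hW g.continuous.continuousOn
        have hw₀max : ∀ w ∈ {w : ↥K | (w : S) ≤ z}, g w ≤ g w₀ := fun w hw => hw₀max' hw
        have : G z ≤ max (-M) (g w₀) := by
          apply csSup_le (hne z)
          rintro r (rfl | ⟨w, hw, rfl⟩)
          · exact le_max_left _ _
          · exact le_max_of_le_right (hw₀max w hw)
        have htg : t ≤ g w₀ := by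
          rcases max_cases (-M) (g w₀) with ⟨heq, -⟩ | ⟨heq, -⟩
          · exfalso; rw [heq] at this; linarith [hz.trans this]
          · rw [heq] at this; linarith [hz.trans this]
        exact ⟨w₀, ⟨w₀, htg, rfl⟩, hw₀⟩
      · exfalso
        have : G z = -M := by
          apply le_antisymm ?_ (hlb z)
          apply csSup_le (hne z)
          rintro r (rfl | ⟨w, hw, rfl⟩)
          · exact le_refl _
          · exact absurd ⟨w, hw⟩ hW
        rw [this] at hz
        linarith
    · rintro ⟨w, ⟨w', hw', rfl⟩, hwz⟩
      calc t ≤ g w' := hw'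
      _ ≤ G z := le_csSup (hbdd z) (Set.mem_insert_of_mem _ ⟨w', hwz, rfl⟩)
  have hmeas : Measurable G := by
    apply measurable_of_Ici
    intro t
    by_cases ht : -M < t
    · rw [show G ⁻¹' (Ici t) = {z : S | t ≤ G z} from rfl, hlevel t ht]
      apply IsClosed.measurableSet
      apply upClosureS_closed
      apply IsCompact.image _ continuous_subtype_val
      exact (IsClosed.preimage g.continuous isClosed_Ici).isCompact
    · push_neg at ht
      have : G ⁻¹' (Ici t) = univ := by
        ext z; simp only [Set.mem_preimage, Set.mem_Ici, Set.mem_univ, iff_true]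
        exact ht.trans (hlb z)
      rw [this]
      exact MeasurableSet.univ
  exact ⟨G, hmeas, hmono, hlb, hub, hKval⟩

end Ambient


section ICL
variable {S : Type*} [TopologicalSpace S] [PolishSpace S] [MeasurableSpace S]
  [BorelSpace S] [PartialOrder S] [OrderClosedTopology S] [Nonempty S]

/-- Integral comparison for bounded monotone functions from uniform closeness on upper sets. -/
lemma integral_mono_comparison {μ ν : Measure S} [IsProbabilityMeasure μ] [IsProbabilityMeasure ν]
    {δ : ℝ}
    (hset : ∀ I : Set S, MeasurableSet I → IsUpperSet I →
      |(μ I).toReal - (ν I).toReal| ≤ δ)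
    {F : S → ℝ} (hFm : Measurable F) (hFmono : Monotone F) {a b : ℝ}
    (hab : a ≤ b) (hFa : ∀ z, a ≤ F z) (hFb : ∀ z, F z ≤ b) :
    |∫ z, F z ∂μ - ∫ z, F z ∂ν| ≤ (b - a) * δ := by
  set F' : S → ℝ := fun z => F z - a with hF'def
  have hF'm : Measurable F' := hFm.sub measurable_const
  have hF'nn : ∀ z, 0 ≤ F' z := fun z => by simp [hF'def, hFa z]
  have hF'le : ∀ z, F' z ≤ b - a := fun z => by simp [hF'def]; linarith [hFb z]
  have hint : ∀ (m : Measure S) [IsProbabilityMeasure m], Integrable F' m := by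
    intro m hm
    refine ⟨hF'm.aestronglyMeasurable, HasFiniteIntegral.of_bounded (C := b - a) ?_⟩
    exact Filter.Eventually.of_forall fun z => by
      rw [Real.norm_eq_abs, abs_of_nonneg (hF'nn z)]; exact hF'le z
  have hdiff : ∫ z, F z ∂μ - ∫ z, F z ∂ν = ∫ z, F' z ∂μ - ∫ z, F' z ∂ν := by
    have h1 : ∀ (m : Measure S) [IsProbabilityMeasure m],
        ∫ z, F' z ∂m = ∫ z, F z ∂m - a := by
      intro m hm
      have hintF : Integrable F m := by
        refine ⟨hFm.aestronglyMeasurable, HasFiniteIntegral.of_bounded (C := max |a| |b|) ?_⟩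
        exact Filter.Eventually.of_forall fun z => by
          rw [Real.norm_eq_abs, abs_le]
          constructor
          · calc -(max |a| |b|) ≤ -|a| := by simp [neg_le_neg_iff, le_max_left]
            _ ≤ a := neg_abs_le a
            _ ≤ F z := hFa z
          · calc F z ≤ b := hFb z
            _ ≤ |b| := le_abs_self b
            _ ≤ max |a| |b| := le_max_right _ _
      rw [hF'def]
      rw [integral_sub hintF (integrable_const a), integral_const]
      simp
    rw [h1 μ, h1 ν]
    ring
  rw [hdiff]
  -- layer cake
  have hlc : ∀ (m : Measure S) [IsProbabilityMeasure m],
      ∫ z, F' z ∂m = ∫ t in Set.Ioi (0:ℝ), (m {z | t < F' z}).toReal := by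
    intro m hm
    exact (hint m).integral_eq_integral_meas_lt (Filter.Eventually.of_forall hF'nn)
  rw [hlc μ, hlc ν]
  set φμ : ℝ → ℝ := fun t => (μ {z | t < F' z}).toReal with hφμ
  set φν : ℝ → ℝ := fun t => (ν {z | t < F' z}).toReal with hφν
  have hanti : ∀ (m : Measure S) [IsFiniteMeasure m],
      Antitone (fun t => (m {z | t < F' z}).toReal) := by
    intro m _ t₁ t₂ h12
    apply ENNReal.toReal_mono (measure_ne_top _ _)
    exact measure_mono fun z hz => lt_of_le_of_lt h12 hz
  have hbound : ∀ (m : Measure S) [IsProbabilityMeasure m], ∀ t : ℝ,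
      (m {z | t < F' z}).toReal ≤ 1 := by
    intro m hm t
    rw [← ENNReal.toReal_one]
    apply ENNReal.toReal_mono ENNReal.one_ne_top
    exact prob_le_one
  have hzero : ∀ (m : Measure S), ∀ t : ℝ, b - a ≤ t → (m {z | t < F' z}).toReal = 0 := by
    intro m t ht
    have : {z | t < F' z} = ∅ := by
      ext z; simp only [Set.mem_setOf_eq, Set.mem_empty_iff_false, iff_false, not_lt]
      exact (hF'le z).trans ht
    rw [this]; simp
  have hintOn : ∀ (m : Measure S) [IsProbabilityMeasure m],
      IntegrableOn (fun t => (m {z | t < F' z}).toReal) (Set.Ioi 0) volume := by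
    intro m hm
    have hmbl : Measurable (fun t => (m {z | t < F' z}).toReal) := (hanti m).measurable
    apply Integrable.mono' (g := fun t => Set.indicator (Set.Ioc (0:ℝ) (b-a)) (fun _ => (1:ℝ)) t)
    · apply (integrable_indicator_iff measurableSet_Ioc).2
      refine integrableOn_const ?_ (by simp)
      exact (lt_of_le_of_lt (Measure.restrict_apply_le _ _)
        (by rw [Real.volume_Ioc]; exact ENNReal.ofReal_lt_top)).ne
    · exact hmbl.aestronglyMeasurable.restrict
    · rw [ae_restrict_iff' measurableSet_Ioi]
      apply Filter.Eventually.of_forall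
      intro t ht
      rw [Real.norm_eq_abs, abs_of_nonneg ENNReal.toReal_nonneg]
      by_cases htb : t ≤ b - a
      · rw [Set.indicator_of_mem (Set.mem_Ioc.2 ⟨ht, htb⟩)]
        exact hbound m t
      · push_neg at htb
        rw [Set.indicator_of_notMem (fun hc => absurd (Set.mem_Ioc.1 hc).2 (not_le.2 htb))]
        rw [hzero m t htb.le]
  rw [← integral_sub (hintOn μ) (hintOn ν)]
  -- split at b - a
  have hsplit : Set.Ioi (0:ℝ) = Set.Ioc 0 (b-a) ∪ Set.Ioi (b-a) := (Set.Ioc_union_Ioi_eq_Ioi (by linarith)).symm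
  have hdisj : Disjoint (Set.Ioc (0:ℝ) (b-a)) (Set.Ioi (b-a)) := by
    rw [Set.disjoint_left]; rintro t ⟨-, h1⟩ h2; exact absurd h2 (not_lt.2 h1)
  have hsub : IntegrableOn (fun t => φμ t - φν t) (Set.Ioi 0) volume :=
    (hintOn μ).sub (hintOn ν)
  rw [hsplit, setIntegral_union hdisj measurableSet_Ioi
    (hsub.mono_set (by rw [hsplit]; exact Set.subset_union_left))
    (hsub.mono_set (by rw [hsplit]; exact Set.subset_union_right))]
  have hzero2 : ∫ t in Set.Ioi (b-a), (φμ t - φν t) = 0 := by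
    apply setIntegral_eq_zero_of_forall_eq_zero
    intro t ht
    rw [hφμ, hφν]
    simp only []
    rw [hzero μ t (le_of_lt ht), hzero ν t (le_of_lt ht)]
    ring
  rw [hzero2, add_zero]
  calc |∫ t in Set.Ioc (0:ℝ) (b-a), (φμ t - φν t)|
      ≤ δ * (volume (Set.Ioc (0:ℝ) (b-a))).toReal := by
        rw [← Real.norm_eq_abs]
        apply norm_setIntegral_le_of_norm_le_const
        · rw [Real.volume_Ioc]; exact ENNReal.ofReal_lt_top
        · intro t ht
          rw [Real.norm_eq_abs]
          apply hset
          · exact hF'm measurableSet_Ioi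
          · intro z z' hzz hz
            simp only [Set.mem_setOf_eq] at hz ⊢
            have h2 := hFmono hzz
            simp only [hF'def] at hz ⊢
            linarith
    _ = (b - a) * δ := by
        rw [Real.volume_Ioc, ENNReal.toReal_ofReal (by linarith)]
        ring

end ICL

end GammaOAux

variable {S : Type*} [TopologicalSpace S] [PolishSpace S] [MeasurableSpace S]
  [BorelSpace S] [PartialOrder S] [OrderClosedTopology S] [Nonempty S]

/-- Tightness plus convergence in the total ordered variation metric implies
weak convergence. -/
theorem tendsto_integral_of_tight_of_gammaO_tendsto_zero
    (μ : ℕ → Measure S) (hprob : ∀ n, IsProbabilityMeasure (μ n))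
    (htight : ∀ ε : ℝ, 0 < ε → ∃ K : Set S, IsCompact K ∧
      ∀ n, μ n Kᶜ < ENNReal.ofReal ε)
    (hconv : Filter.Tendsto (fun n => gammaO (μ n) (μ 0)) Filter.atTop (nhds 0)) :
    ∀ h : S → ℝ, Continuous h → (∃ C : ℝ, ∀ x, |h x| ≤ C) →
      Filter.Tendsto (fun n => ∫ x, h x ∂(μ n)) Filter.atTop
        (nhds (∫ x, h x ∂(μ 0))) := by
  intro h hcont hbdd
  obtain ⟨C, hC⟩ := hbdd
  have hC0 : 0 ≤ C := le_trans (abs_nonneg _) (hC (Classical.arbitrary S))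
  letI := TopologicalSpace.upgradeIsCompletelyMetrizable S
  rw [Metric.tendsto_atTop]
  intro ε hε
  set ε0 : ℝ := min ε 1 with hε0def
  have hε0pos : 0 < ε0 := lt_min hε one_pos
  have hε01 : ε0 ≤ 1 := min_le_right _ _
  have hε0ε : ε0 ≤ ε := min_le_left _ _
  set ε' : ℝ := ε0 / 8 with hε'def
  have hε'pos : 0 < ε' := by positivity
  have hε'le : ε' ≤ 1 := by rw [hε'def]; linarith
  set κ : ℝ := ε0 / (8 * (2 * C + 1)) with hκdef
  have hκpos : 0 < κ := by positivity
  obtain ⟨K, hK, hKtail⟩ := htight κ hκpos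
  have hKtail' : ∀ n, ((μ n) Kᶜ).toReal ≤ κ := by
    intro n
    haveI := hprob n
    calc ((μ n) Kᶜ).toReal ≤ (ENNReal.ofReal κ).toReal :=
      ENNReal.toReal_mono ENNReal.ofReal_ne_top (le_of_lt (hKtail n))
    _ = κ := ENNReal.toReal_ofReal (le_of_lt hκpos)
  haveI hKc : CompactSpace ↥K := isCompact_iff_compactSpace.mp hK
  haveI hKo : OrderClosedTopology ↥K := GammaOAux.subtype_orderClosed K
  -- Stone–Weierstrass approximation on K
  set hmap : C(↥K, ℝ) := ⟨fun x => h ↑x, hcont.comp continuous_subtype_val⟩ with hhmap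
  obtain ⟨g₁, g₂, hm1, hm2, happrox⟩ := GammaOAux.sw_monotone_approx hmap hε'pos
  set M₁ : ℝ := ‖g₁‖ with hM₁
  set M₂ : ℝ := ‖g₂‖ with hM₂
  have hM₁0 : 0 ≤ M₁ := norm_nonneg _
  have hM₂0 : 0 ≤ M₂ := norm_nonneg _
  obtain ⟨G₁, hG₁meas, hG₁mono, hG₁lb, hG₁ub, hG₁K⟩ :=
    GammaOAux.mono_extension hK g₁ hm1 hM₁0 (fun x => by
      rw [← Real.norm_eq_abs]; exact g₁.norm_coe_le_norm x)
  obtain ⟨G₂, hG₂meas, hG₂mono, hG₂lb, hG₂ub, hG₂K⟩ :=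
    GammaOAux.mono_extension hK g₂ hm2 hM₂0 (fun x => by
      rw [← Real.norm_eq_abs]; exact g₂.norm_coe_le_norm x)
  set c : ℝ := C + ε' with hcdef
  have hc0 : 0 ≤ c := by positivity
  set F₁ : S → ℝ := fun z => max (min (G₁ z) (G₂ z + c)) (G₂ z - c) with hF₁def
  have hF₁meas : Measurable F₁ :=
    ((hG₁meas.min (hG₂meas.add_const c)).max (hG₂meas.sub_const c))
  have hF₁mono : Monotone F₁ := by
    intro a b hab
    exact max_le_max (min_le_min (hG₁mono hab) (by linarith [hG₂mono hab]))
      (by linarith [hG₂mono hab])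
  set lo₁ : ℝ := min (-M₁) (-M₂ - c) with hlo₁
  set hi₁ : ℝ := max M₁ (M₂ + c) with hhi₁
  have hlohi : lo₁ ≤ hi₁ := by
    rw [hlo₁, hhi₁]
    calc min (-M₁) (-M₂ - c) ≤ -M₁ := min_le_left _ _
    _ ≤ M₁ := by linarith
    _ ≤ max M₁ (M₂ + c) := le_max_left _ _
  have hF₁lb : ∀ z, lo₁ ≤ F₁ z := by
    intro z
    calc lo₁ ≤ -M₂ - c := min_le_right _ _
    _ ≤ G₂ z - c := by linarith [hG₂lb z]
    _ ≤ F₁ z := le_max_right _ _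
  have hF₁ub : ∀ z, F₁ z ≤ hi₁ := by
    intro z
    apply max_le
    · calc min (G₁ z) (G₂ z + c) ≤ G₁ z := min_le_left _ _
      _ ≤ M₁ := hG₁ub z
      _ ≤ hi₁ := le_max_left _ _
    · calc G₂ z - c ≤ M₂ + c := by linarith [hG₂ub z]
      _ ≤ hi₁ := le_max_right _ _
  -- the clamp identity
  have hDeq : ∀ z, F₁ z - G₂ z = max (min (G₁ z - G₂ z) c) (-c) := by
    intro z
    rw [hF₁def]
    have e1 : G₂ z + c - G₂ z = c := by ring
    have e2 : G₂ z - c - G₂ z = -c := by ring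
    rw [← max_sub_sub_right, ← min_sub_sub_right, e1, e2]
  have hDabs : ∀ z, |F₁ z - G₂ z| ≤ c := by
    intro z
    rw [hDeq z, abs_le]
    constructor
    · exact le_max_right _ _
    · exact max_le (min_le_right _ _) (by linarith)
  have hDK : ∀ x : ↥K, |h ↑x - (F₁ ↑x - G₂ ↑x)| ≤ ε' := by
    intro x
    rw [hDeq, hG₁K x, hG₂K x]
    have happ := happrox x
    have hhx : hmap x = h ↑x := rfl
    rw [hhx] at happ
    have hu1 : g₁ x - g₂ x ≤ c := by
      have := (abs_le.1 happ).1
      have := (abs_le.1 (hC (↑x : S))).2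
      rw [hcdef]; linarith
    have hu2 : -c ≤ g₁ x - g₂ x := by
      have := (abs_le.1 happ).2
      have := (abs_le.1 (hC (↑x : S))).1
      rw [hcdef]; linarith
    rw [min_eq_left hu1, max_eq_left hu2]
    exact happ
  have hhDb : ∀ z, |h z - (F₁ z - G₂ z)| ≤
      ε' + (2 * C + ε') * Set.indicator Kᶜ (fun _ => (1:ℝ)) z := by
    intro z
    by_cases hz : z ∈ K
    · rw [Set.indicator_of_notMem (by simpa using hz)]
      rw [mul_zero, add_zero]
      exact hDK ⟨z, hz⟩
    · rw [Set.indicator_of_mem (by simpa using hz), mul_one]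
      calc |h z - (F₁ z - G₂ z)| ≤ |h z| + |F₁ z - G₂ z| := abs_sub _ _
      _ ≤ C + c := add_le_add (hC z) (hDabs z)
      _ ≤ ε' + (2 * C + ε') := by rw [hcdef]; linarith
  -- integrability
  have hKmeas : MeasurableSet Kᶜ := (hK.isClosed.measurableSet).compl
  have hint_h : ∀ n, Integrable h (μ n) := by
    intro n
    haveI := hprob n
    exact ⟨hcont.measurable.aestronglyMeasurable,
      HasFiniteIntegral.of_bounded (C := C)
        (Filter.Eventually.of_forall fun z => by rw [Real.norm_eq_abs]; exact hC z)⟩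
  have hint_F₁ : ∀ n, Integrable F₁ (μ n) := by
    intro n
    haveI := hprob n
    refine ⟨hF₁meas.aestronglyMeasurable,
      HasFiniteIntegral.of_bounded (C := max |lo₁| |hi₁|) ?_⟩
    apply Filter.Eventually.of_forall
    intro z
    rw [Real.norm_eq_abs, abs_le]
    constructor
    · calc -(max |lo₁| |hi₁|) ≤ -|lo₁| := by simp [le_max_left]
      _ ≤ lo₁ := neg_abs_le _
      _ ≤ F₁ z := hF₁lb z
    · calc F₁ z ≤ hi₁ := hF₁ub z
      _ ≤ |hi₁| := le_abs_self _
      _ ≤ max |lo₁| |hi₁| := le_max_right _ _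
  have hint_G₂ : ∀ n, Integrable G₂ (μ n) := by
    intro n
    haveI := hprob n
    refine ⟨hG₂meas.aestronglyMeasurable,
      HasFiniteIntegral.of_bounded (C := M₂) ?_⟩
    apply Filter.Eventually.of_forall
    intro z
    rw [Real.norm_eq_abs, abs_le]
    exact ⟨hG₂lb z, hG₂ub z⟩
  -- set-level bound from gammaO
  have hδ : ∀ n, ∀ I : Set S, MeasurableSet I → IsUpperSet I →
      |((μ n) I).toReal - ((μ 0) I).toReal| ≤ gammaO (μ n) (μ 0) := by
    intro n I hI hU
    haveI := hprob n
    haveI := hprob 0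
    exact GammaOAux.abs_sub_le_gammaO (μ n) (μ 0) hI hU
  -- integral comparisons
  have est1 : ∀ n, |∫ z, F₁ z ∂(μ n) - ∫ z, F₁ z ∂(μ 0)| ≤
      (hi₁ - lo₁) * gammaO (μ n) (μ 0) := by
    intro n
    haveI := hprob n
    haveI := hprob 0
    exact GammaOAux.integral_mono_comparison (hδ n) hF₁meas hF₁mono hlohi hF₁lb hF₁ub
  have est2 : ∀ n, |∫ z, G₂ z ∂(μ n) - ∫ z, G₂ z ∂(μ 0)| ≤
      (M₂ - (-M₂)) * gammaO (μ n) (μ 0) := by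
    intro n
    haveI := hprob n
    haveI := hprob 0
    exact GammaOAux.integral_mono_comparison (hδ n) hG₂meas hG₂mono (by linarith) hG₂lb hG₂ub
  set R : ℝ := (hi₁ - lo₁) + 2 * M₂ with hRdef
  have hR0 : 0 ≤ R := by rw [hRdef]; linarith
  -- tail estimate
  have htail : ∀ n, |∫ z, (h z - (F₁ z - G₂ z)) ∂(μ n)| ≤ ε0 / 4 := by
    intro n
    haveI := hprob n
    have hintD : Integrable (fun z => F₁ z - G₂ z) (μ n) := (hint_F₁ n).sub (hint_G₂ n)
    have hinthd : Integrable (fun z => h z - (F₁ z - G₂ z)) (μ n) := (hint_h n).sub hintD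
    have hintbd : Integrable (fun z =>
        ε' + (2 * C + ε') * Set.indicator Kᶜ (fun _ => (1:ℝ)) z) (μ n) := by
      apply Integrable.add (integrable_const _)
      apply Integrable.const_mul
      rw [integrable_indicator_iff hKmeas]
      refine integrableOn_const ?_ (by simp)
      exact (measure_lt_top _ _).ne
    calc |∫ z, (h z - (F₁ z - G₂ z)) ∂(μ n)|
        ≤ ∫ z, |h z - (F₁ z - G₂ z)| ∂(μ n) := by
          rw [← Real.norm_eq_abs]
          refine (norm_integral_le_integral_norm _).trans (le_of_eq ?_)
          simp [Real.norm_eq_abs]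
    _ ≤ ∫ z, (ε' + (2 * C + ε') * Set.indicator Kᶜ (fun _ => (1:ℝ)) z) ∂(μ n) := by
        apply integral_mono hinthd.abs hintbd
        intro z
        exact hhDb z
    _ = ε' + (2 * C + ε') * ((μ n) Kᶜ).toReal := by
        rw [integral_add (integrable_const _)]
        · rw [integral_const]
          simp only [probReal_univ, measure_univ, ENNReal.toReal_one, smul_eq_mul, one_mul]
          rw [integral_const_mul]
          congr 1
          rw [integral_indicator_const _ hKmeas]
          simp [measureReal_def]
        · apply Integrable.const_mul
          rw [integrable_indicator_iff hKmeas]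
          refine integrableOn_const ?_ (by simp)
          exact (measure_lt_top _ _).ne
    _ ≤ ε' + (2 * C + 1) * κ := by
        have h1 : (2 * C + ε') * ((μ n) Kᶜ).toReal ≤ (2 * C + 1) * κ := by
          apply mul_le_mul (by linarith) (hKtail' n) ENNReal.toReal_nonneg (by linarith)
        linarith
    _ = ε0 / 8 + ε0 / 8 := by
        rw [hε'def, hκdef]
        congr 1
        field_simp
    _ ≤ ε0 / 4 := by linarith
  -- convergence of gammaO
  have hRpos : 0 < R + 1 := by linarith
  obtain ⟨N, hN⟩ := Metric.tendsto_atTop.1 hconv (ε0 / (4 * (R + 1))) (by positivity)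
  refine ⟨N, fun n hn => ?_⟩
  have hγ : gammaO (μ n) (μ 0) < ε0 / (4 * (R + 1)) := by
    have := hN n hn
    rw [Real.dist_eq, sub_zero] at this
    exact lt_of_le_of_lt (le_abs_self _) this
  have hγ0 : 0 ≤ gammaO (μ n) (μ 0) := by
    haveI := hprob n
    haveI := hprob 0
    exact GammaOAux.gammaO_nonneg _ _
  -- putting it together
  haveI := hprob n
  haveI := hprob 0
  have hdec : ∀ m, Integrable h (μ m) → ∫ z, h z ∂(μ m) =
      (∫ z, (h z - (F₁ z - G₂ z)) ∂(μ m)) + ((∫ z, F₁ z ∂(μ m)) - ∫ z, G₂ z ∂(μ m)) := by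
    intro m hi
    haveI := hprob m
    have hintD : Integrable (fun z => F₁ z - G₂ z) (μ m) := (hint_F₁ m).sub (hint_G₂ m)
    rw [integral_sub hi hintD, integral_sub (hint_F₁ m) (hint_G₂ m)]
    ring
  rw [Real.dist_eq, hdec n (hint_h n), hdec 0 (hint_h 0)]
  have hmid : |(∫ z, F₁ z ∂(μ n) - ∫ z, F₁ z ∂(μ 0)) - (∫ z, G₂ z ∂(μ n) - ∫ z, G₂ z ∂(μ 0))| ≤
      R * gammaO (μ n) (μ 0) := by
    calc |(∫ z, F₁ z ∂(μ n) - ∫ z, F₁ z ∂(μ 0)) - (∫ z, G₂ z ∂(μ n) - ∫ z, G₂ z ∂(μ 0))|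
        ≤ |∫ z, F₁ z ∂(μ n) - ∫ z, F₁ z ∂(μ 0)| + |∫ z, G₂ z ∂(μ n) - ∫ z, G₂ z ∂(μ 0)| :=
          abs_sub _ _
    _ ≤ (hi₁ - lo₁) * gammaO (μ n) (μ 0) + (M₂ - (-M₂)) * gammaO (μ n) (μ 0) :=
          add_le_add (est1 n) (est2 n)
    _ = R * gammaO (μ n) (μ 0) := by rw [hRdef]; ring
  have hmid2 : R * gammaO (μ n) (μ 0) < ε0 / 4 := by
    calc R * gammaO (μ n) (μ 0) ≤ R * (ε0 / (4 * (R + 1))) :=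
      mul_le_mul_of_nonneg_left (le_of_lt hγ) hR0
    _ < ε0 / 4 := by
        have hkey : (R + 1) * (ε0 / (4 * (R + 1))) = ε0 / 4 := by
          field_simp
        have hstep : R * (ε0 / (4 * (R + 1))) < (R + 1) * (ε0 / (4 * (R + 1))) := by
          apply mul_lt_mul_of_pos_right (by linarith) (by positivity)
        linarith
  set x : ℝ := ∫ z, (h z - (F₁ z - G₂ z)) ∂(μ n) with hx
  set y : ℝ := ∫ z, (h z - (F₁ z - G₂ z)) ∂(μ 0) with hy
  set u : ℝ := (∫ z, F₁ z ∂(μ n)) - ∫ z, G₂ z ∂(μ n) with hu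
  set v : ℝ := (∫ z, F₁ z ∂(μ 0)) - ∫ z, G₂ z ∂(μ 0) with hv
  have huv : |u - v| < ε0 / 4 := by
    have heq : u - v = (∫ z, F₁ z ∂(μ n) - ∫ z, F₁ z ∂(μ 0)) -
        (∫ z, G₂ z ∂(μ n) - ∫ z, G₂ z ∂(μ 0)) := by rw [hu, hv]; ring
    rw [heq]
    exact lt_of_le_of_lt hmid hmid2
  have hfinal : |x + u - (y + v)| < ε0 := by
    calc |x + u - (y + v)| = |x + (u - v) + (-y)| := by ring_nf
    _ ≤ |x + (u - v)| + |(-y)| := abs_add_le _ _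
    _ ≤ |x| + |u - v| + |(-y)| := by linarith [abs_add_le x (u - v)]
    _ = |x| + |u - v| + |y| := by rw [abs_neg]
    _ < ε0/4 + ε0/4 + ε0/4 := by
        have h1 := htail n
        have h2 := htail 0
        rw [← hx] at h1
        rw [← hy] at h2
        have : |x| ≤ ε0/4 := h1
        have : |y| ≤ ε0/4 := h2
        linarith
    _ < ε0 := by linarith
  exact lt_of_lt_of_le hfinal hε0ε
end
end

section
/- Let P be a monotone Markov kernel from S₀ to S₁. If μ, μ', ν, ν' are Borel probability measures on S₀ with μ' ≼sd μ and ν ≼sd ν', then α_O(μP, νP) ≤ α_O(μ'P, ν'P). -/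
open MeasureTheory

noncomputable section

variable {S : Type*} [TopologicalSpace S] [PolishSpace S] [MeasurableSpace S]
  [BorelSpace S] [PartialOrder S] [OrderClosedTopology S] [Nonempty S]


namespace AlphaOAux

open Filter Set
open scoped ENNReal NNReal Topology

section UF

variable {ι : Type*} (𝔘 : Ultrafilter ι)


/-- Limit of an `ℝ≥0∞`-valued function along an ultrafilter. -/
noncomputable def uflim (f : ι → ℝ≥0∞) : ℝ≥0∞ :=
  (isCompact_univ.ultrafilter_le_nhds (𝔘.map f)
    (by simpa using le_principal_iff.2 univ_mem)).choose

lemma tendsto_uflim (f : ι → ℝ≥0∞) : Tendsto f 𝔘 (𝓝 (uflim 𝔘 f)) :=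
  (isCompact_univ.ultrafilter_le_nhds (𝔘.map f)
    (by simpa using le_principal_iff.2 univ_mem)).choose_spec.2

lemma uflim_eq {f : ι → ℝ≥0∞} {a : ℝ≥0∞} (h : Tendsto f 𝔘 (𝓝 a)) : uflim 𝔘 f = a :=
  tendsto_nhds_unique (tendsto_uflim 𝔘 f) h

lemma uflim_const (a : ℝ≥0∞) : uflim 𝔘 (fun _ => a) = a :=
  uflim_eq 𝔘 tendsto_const_nhds

lemma uflim_add (f g : ι → ℝ≥0∞) : uflim 𝔘 (f + g) = uflim 𝔘 f + uflim 𝔘 g :=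
  uflim_eq 𝔘 ((tendsto_uflim 𝔘 f).add (tendsto_uflim 𝔘 g))

lemma uflim_mono {f g : ι → ℝ≥0∞} (h : ∀ i, f i ≤ g i) : uflim 𝔘 f ≤ uflim 𝔘 g :=
  le_of_tendsto_of_tendsto (tendsto_uflim 𝔘 f) (tendsto_uflim 𝔘 g)
    (Eventually.of_forall h)

lemma uflim_sum {s : Finset ℕ} (f : ℕ → ι → ℝ≥0∞) :
    uflim 𝔘 (fun i => ∑ n ∈ s, f n i) = ∑ n ∈ s, uflim 𝔘 (f n) := by
  classical
  induction s using Finset.induction with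
  | empty => simpa using uflim_const 𝔘 0
  | insert a s hn ih =>
      rw [Finset.sum_insert hn]
      rw [← ih, ← uflim_add]
      congr 1
      ext i
      simp [Finset.sum_insert hn]


variable {α : Type*} [MeasurableSpace α]


/-- Ultrafilter limit of a family of measures dominated by a finite measure `τ`
is a measure. -/
noncomputable def ufMeasure (θ : ι → Measure α) (τ : Measure α) [IsFiniteMeasure τ]
    (hθ : ∀ i, θ i ≤ τ) : Measure α :=
  Measure.ofMeasurable (fun A _ => uflim 𝔘 (fun i => θ i A))
    (by simpa using uflim_const 𝔘 0)
    (by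
      intro f hf hdisj
      -- countable additivity
      have key : ∀ k : ℕ,
          (∑ n ∈ Finset.range k, uflim 𝔘 (fun i => θ i (f n)))
            ≤ uflim 𝔘 (fun i => θ i (⋃ n, f n)) ∧
          uflim 𝔘 (fun i => θ i (⋃ n, f n))
            ≤ (∑ n ∈ Finset.range k, uflim 𝔘 (fun i => θ i (f n)))
              + τ (⋃ n, f (n + k)) := by
        intro k
        constructor
        · rw [← uflim_sum]
          refine uflim_mono 𝔘 (fun i => ?_)
          have : (∑ n ∈ Finset.range k, θ i (f n)) = θ i (⋃ n ∈ Finset.range k, f n) := by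
            rw [measure_biUnion_finset (fun m _ n _ hmn => hdisj hmn) (fun n _ => hf n)]
          rw [this]
          exact measure_mono (iUnion₂_subset fun n _ => subset_iUnion f n)
        · have hsplit : ∀ i, θ i (⋃ n, f n)
              ≤ (∑ n ∈ Finset.range k, θ i (f n)) + τ (⋃ n, f (n + k)) := by
            intro i
            have hcover : (⋃ n, f n) ⊆ (⋃ n ∈ Finset.range k, f n) ∪ (⋃ n, f (n + k)) := by
              intro x hx
              obtain ⟨n, hn⟩ := mem_iUnion.1 hx
              rcases lt_or_ge n k with h | h
              · exact Or.inl (mem_biUnion (Finset.mem_range.2 h) hn)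
              · exact Or.inr (mem_iUnion.2 ⟨n - k, by rwa [Nat.sub_add_cancel h]⟩)
            calc θ i (⋃ n, f n) ≤ θ i ((⋃ n ∈ Finset.range k, f n) ∪ (⋃ n, f (n + k))) :=
                  measure_mono hcover
              _ ≤ θ i (⋃ n ∈ Finset.range k, f n) + θ i (⋃ n, f (n + k)) := measure_union_le _ _
              _ ≤ (∑ n ∈ Finset.range k, θ i (f n)) + τ (⋃ n, f (n + k)) := by
                  gcongr
                  · exact measure_biUnion_finset_le _ _
                  · exact hθ i
          calc uflim 𝔘 (fun i => θ i (⋃ n, f n))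
              ≤ uflim 𝔘 (fun i => (∑ n ∈ Finset.range k, θ i (f n)) + τ (⋃ n, f (n + k))) :=
                uflim_mono 𝔘 hsplit
            _ = (∑ n ∈ Finset.range k, uflim 𝔘 (fun i => θ i (f n))) + τ (⋃ n, f (n + k)) := by
                rw [show (fun i => (∑ n ∈ Finset.range k, θ i (f n)) + τ (⋃ n, f (n + k)))
                    = (fun i => ∑ n ∈ Finset.range k, θ i (f n))
                      + (fun _ => τ (⋃ n, f (n + k))) from rfl,
                  uflim_add, uflim_sum, uflim_const]
      -- tail goes to zero
      have htail : Tendsto (fun k => τ (⋃ n, f (n + k))) atTop (𝓝 0) := by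
        have hsum : ∑' n, τ (f n) ≠ ∞ := by
          rw [← measure_iUnion hdisj hf]
          exact measure_ne_top τ _
        have hle : ∀ k, τ (⋃ n, f (n + k)) ≤ ∑' n, τ (f (n + k)) := fun k =>
          measure_iUnion_le _
        have h0 : Tendsto (fun k => ∑' n, τ (f (n + k))) atTop (𝓝 0) :=
          ENNReal.tendsto_sum_nat_add _ hsum
        exact tendsto_of_tendsto_of_tendsto_of_le_of_le tendsto_const_nhds h0
          (fun k => zero_le) hle
      -- conclude
      refine le_antisymm ?_ ?_
      · have : Tendsto (fun k => (∑ n ∈ Finset.range k, uflim 𝔘 (fun i => θ i (f n)))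
            + τ (⋃ n, f (n + k))) atTop (𝓝 ((∑' n, uflim 𝔘 (fun i => θ i (f n))) + 0)) :=
          (ENNReal.tendsto_nat_tsum _).add htail
        rw [add_zero] at this
        exact ge_of_tendsto this (Eventually.of_forall fun k => (key k).2)
      · rw [ENNReal.tsum_eq_iSup_nat]
        exact iSup_le fun k => (key k).1)

lemma ufMeasure_apply (θ : ι → Measure α) (τ : Measure α) [IsFiniteMeasure τ]
    (hθ : ∀ i, θ i ≤ τ) {A : Set α} (hA : MeasurableSet A) :
    ufMeasure 𝔘 θ τ hθ A = uflim 𝔘 (fun i => θ i A) :=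
  Measure.ofMeasurable_apply A hA

lemma ufMeasure_le (θ : ι → Measure α) (τ : Measure α) [IsFiniteMeasure τ]
    (hθ : ∀ i, θ i ≤ τ) : ufMeasure 𝔘 θ τ hθ ≤ τ := by
  refine Measure.le_iff.2 fun A hA => ?_
  rw [ufMeasure_apply 𝔘 θ τ hθ hA]
  have := uflim_mono 𝔘 (fun i => Measure.le_iff.1 (hθ i) A hA)
  rwa [uflim_const] at this


/-- A set closed upward under the relation `r`. -/

def UpClosed (r : α → α → Prop) (I : Set α) : Prop := ∀ ⦃a b⦄, r a b → a ∈ I → b ∈ I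

lemma finkey (r : α → α → Prop) (κ τ : Measure α) [IsFiniteMeasure τ] [IsFiniteMeasure κ]
    (hdom : ∀ I : Set α, MeasurableSet I → UpClosed r I → κ I ≤ τ I)
    (hm : κ univ ≤ τ univ)
    {J : Type*} [Fintype J] (I : J → Set α) (hIm : ∀ j, MeasurableSet (I j))
    (hIu : ∀ j, UpClosed r (I j)) (t : J → ℝ≥0) :
    ∃ θ : Measure α, θ ≤ τ ∧ θ univ = κ univ ∧
      (∑ j, (t j : ℝ≥0∞) * κ (I j)) ≤ ∑ j, (t j : ℝ≥0∞) * θ (I j) := by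
  classical
  set m := κ univ with hm_def
  set φ : α → ℝ := fun x => ∑ j, (t j : ℝ) * (I j).indicator (fun _ => (1:ℝ)) x with hφ
  have hφmeas : Measurable φ := by
    apply Finset.measurable_sum
    intro j _
    exact (measurable_const.indicator (hIm j)).const_mul _
  have hφnn : ∀ x, 0 ≤ φ x := by
    intro x
    apply Finset.sum_nonneg
    intro j _
    apply mul_nonneg (t j).2
    by_cases h : x ∈ I j <;> simp [Set.indicator, h]
  have hφmono : ∀ ⦃a b⦄, r a b → φ a ≤ φ b := by
    intro a b hab
    apply Finset.sum_le_sum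
    intro j _
    apply mul_le_mul_of_nonneg_left _ (t j).2
    by_cases h : a ∈ I j
    · have : b ∈ I j := hIu j hab h
      simp [Set.indicator, h, this]
    · by_cases h' : b ∈ I j <;> simp [Set.indicator, h, h']
  -- level sets
  set L : ℝ → Set α := fun s => {x | s < φ x} with hL
  have hLmeas : ∀ s, MeasurableSet (L s) := fun s => measurableSet_lt measurable_const hφmeas
  have hLup : ∀ s, UpClosed r (L s) := fun s a b hab ha => lt_of_lt_of_le ha (hφmono hab)
  have hLdom : ∀ s, κ (L s) ≤ τ (L s) := fun s => hdom _ (hLmeas s) (hLup s)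
  have hLm : ∀ s, κ (L s) ≤ m := fun s => measure_mono (subset_univ _)
  -- threshold
  set Q : Set ℝ := {s : ℝ | 0 ≤ s ∧ τ (L s) ≤ m} with hQ
  have hQne : Q.Nonempty := by
    refine ⟨∑ j, (t j : ℝ), ?_, ?_⟩
    · exact Finset.sum_nonneg fun j _ => (t j).2
    · have : L (∑ j, (t j : ℝ)) = ∅ := by
        ext x
        simp only [hL, mem_setOf_eq, mem_empty_iff_false, iff_false, not_lt]
        apply Finset.sum_le_sum
        intro j _
        by_cases h : x ∈ I j
        · simp [Set.indicator, h]
        · simp [Set.indicator, h, (t j).2]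
      simp [this]
  have hQbdd : BddBelow Q := ⟨0, fun s hs => hs.1⟩
  have hQup : ∀ s ∈ Q, ∀ s', s ≤ s' → s' ∈ Q := by
    intro s hs s' hss'
    exact ⟨le_trans hs.1 hss', le_trans (measure_mono fun x hx => lt_of_le_of_lt hss' hx) hs.2⟩
  set s₀ : ℝ := sInf Q with hs₀
  have hs₀nn : 0 ≤ s₀ := le_csInf hQne fun s hs => hs.1
  have hmemQ : ∀ s, s₀ < s → s ∈ Q := by
    intro s hs
    obtain ⟨q, hq, hqs⟩ := exists_lt_of_csInf_lt hQne hs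
    exact hQup q hq s hqs.le
  set A : Set α := {x | s₀ < φ x} with hA
  set B : Set α := {x | s₀ ≤ φ x} with hB
  have hABsub : A ⊆ B := fun x hx => le_of_lt (show s₀ < φ x from hx)
  have hAmeas : MeasurableSet A := hLmeas s₀
  have hBmeas : MeasurableSet B := measurableSet_le measurable_const hφmeas
  -- τ A ≤ m
  have hτA : τ A ≤ m := by
    have hcup : A = ⋃ n : ℕ, L (s₀ + 1/(n+1)) := by
      ext x
      simp only [hA, hL, mem_setOf_eq, mem_iUnion]
      constructor
      · intro hx
        obtain ⟨n, hn⟩ := exists_nat_one_div_lt (sub_pos.2 hx)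
        exact ⟨n, by linarith⟩
      · rintro ⟨n, hn⟩
        have : (0:ℝ) < 1/(n+1) := by positivity
        linarith
    have hmono : Monotone (fun n : ℕ => L (s₀ + 1/(n+1))) := by
      intro n k h x hx
      have h1 : (1:ℝ)/(k+1) ≤ 1/(n+1) := by
        apply one_div_le_one_div_of_le (by positivity)
        have : (n:ℝ) ≤ k := by exact_mod_cast h
        linarith
      have hx' : s₀ + 1/(n+1) < φ x := hx
      show s₀ + 1/(k+1) < φ x
      linarith
    rw [hcup, hmono.directed_le.measure_iUnion]
    refine iSup_le fun n => ?_
    refine (hmemQ _ ?_).2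
    have : (0:ℝ) < 1/(n+1) := by positivity
    linarith
  -- m ≤ τ B
  have hτB : m ≤ τ B := by
    rcases eq_or_lt_of_le hs₀nn with h0 | h0
    · have : B = univ := by
        ext x
        simp only [hB, mem_setOf_eq, mem_univ, iff_true]
        rw [← h0]
        exact hφnn x
      rw [this]
      exact hm
    · have hseqnn : ∀ n : ℕ, 0 ≤ s₀ - s₀/(n+2) := by
        intro n
        rw [sub_nonneg, div_le_iff₀ (by positivity : (0:ℝ) < (n:ℝ)+2)]
        nlinarith
      have hgt : ∀ n : ℕ, m ≤ τ (L (s₀ - s₀/(n+2))) := by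
        intro n
        by_contra hcon
        push_neg at hcon
        have hmem : s₀ - s₀/(n+2) ∈ Q := ⟨hseqnn n, hcon.le⟩
        have hlt : s₀ - s₀/(n+2) < s₀ := by
          have : (0:ℝ) < s₀/(n+2) := by positivity
          linarith
        exact absurd (csInf_le hQbdd hmem) (not_le.2 hlt)
      have hBcap : B = ⋂ n : ℕ, L (s₀ - s₀/(n+2)) := by
        ext x
        simp only [hB, hL, mem_setOf_eq, mem_iInter]
        constructor
        · intro hx n
          have : (0:ℝ) < s₀/(n+2) := by positivity
          linarith
        · intro hx
          by_contra hcon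
          push_neg at hcon
          have hd : (0:ℝ) < (s₀ - φ x)/s₀ := div_pos (by linarith) h0
          obtain ⟨n, hn⟩ := exists_nat_one_div_lt hd
          rw [div_lt_div_iff₀ (by positivity : (0:ℝ) < (n:ℝ)+1) h0] at hn
          have h2 : s₀/((n:ℝ)+2) < s₀ - φ x := by
            rw [div_lt_iff₀ (by positivity : (0:ℝ) < (n:ℝ)+2)]
            nlinarith
          have := hx n
          linarith
      have hanti : Antitone (fun n : ℕ => L (s₀ - s₀/(n+2))) := by
        intro n k h x hx
        have h1 : s₀/((k:ℝ)+2) ≤ s₀/((n:ℝ)+2) := by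
          apply div_le_div_of_nonneg_left h0.le (by positivity)
          have : (n:ℝ) ≤ k := by exact_mod_cast h
          linarith
        have hx' : s₀ - s₀/(k+2) < φ x := hx
        show s₀ - s₀/(n+2) < φ x
        linarith
      have hlim : Tendsto (fun n : ℕ => τ (L (s₀ - s₀/(n+2)))) atTop
          (𝓝 (τ (⋂ n : ℕ, L (s₀ - s₀/(n+2))))) :=
        tendsto_measure_iInter_atTop (fun n => (hLmeas _).nullMeasurableSet) hanti
          ⟨0, measure_ne_top τ _⟩
      rw [hBcap]
      exact ge_of_tendsto' hlim hgt |>.trans_eq rfl |> fun h => h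
  -- the top-fill measure
  set c : ℝ≥0∞ := (m - τ A) / (τ B - τ A) with hc
  have hfinτA : τ A ≠ ∞ := measure_ne_top τ A
  have hτAleB : τ A ≤ τ B := measure_mono hABsub
  have hτAlem : τ A ≤ m := hτA
  have hc1 : c ≤ 1 := by
    rcases eq_or_ne (τ B - τ A) 0 with hz | hz
    · have hBA : τ B ≤ τ A := tsub_eq_zero_iff_le.1 hz
      have hmA : m - τ A = 0 := tsub_eq_zero_iff_le.2 (le_trans hτB hBA)
      simp [hc, hmA]
    · rw [hc, ENNReal.div_le_iff hz (tsub_le_self.trans_lt (measure_lt_top τ B)).ne]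
      rw [one_mul]
      exact tsub_le_tsub_right hτB (τ A)
  set θ : Measure α := τ.restrict A + c • τ.restrict (B \ A) with hθdef
  have hθapp : ∀ E : Set α, MeasurableSet E → θ E = τ (E ∩ A) + c * τ (E ∩ (B \ A)) := by
    intro E hE
    simp [hθdef, Measure.restrict_apply hE, smul_eq_mul]
  have hmass : τ A + c * τ (B \ A) = m := by
    have hdiff : τ (B \ A) = τ B - τ A := measure_diff hABsub hAmeas.nullMeasurableSet hfinτA
    rw [hdiff]
    rcases eq_or_ne (τ B - τ A) 0 with hz | hz
    · have hBA : τ B ≤ τ A := tsub_eq_zero_iff_le.1 hz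
      have hmA : m = τ A := le_antisymm (le_trans hτB hBA) hτA
      rw [hz, mul_zero, add_zero, hmA]
    · rw [hc, ENNReal.div_mul_cancel hz (tsub_le_self.trans_lt (measure_lt_top τ B)).ne]
      exact add_tsub_cancel_of_le hτAlem
  have hθle : θ ≤ τ := by
    refine Measure.le_iff.2 fun E hE => ?_
    rw [hθapp E hE]
    have hdisj : Disjoint (E ∩ A) (E ∩ (B \ A)) :=
      Disjoint.mono inter_subset_right inter_subset_right disjoint_sdiff_self_right
    calc τ (E ∩ A) + c * τ (E ∩ (B \ A)) ≤ τ (E ∩ A) + 1 * τ (E ∩ (B \ A)) :=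
          add_le_add_right (mul_le_mul_left hc1 _) _
      _ = τ ((E ∩ A) ∪ (E ∩ (B \ A))) := by
          rw [one_mul, measure_union hdisj (hE.inter (hBmeas.diff hAmeas))]
      _ ≤ τ E := measure_mono (by
          intro x hx
          rcases hx with hx | hx
          · exact hx.1
          · exact hx.1)
  have hθuniv : θ univ = m := by
    rw [hθapp univ MeasurableSet.univ]
    simp only [univ_inter]
    exact hmass
  -- level comparison
  have hlevel : ∀ s : ℝ, κ (L s) ≤ θ (L s) := by
    intro s
    rcases le_or_gt s₀ s with hcase | hcase
    · have hsub : L s ⊆ A := fun x hx => lt_of_le_of_lt hcase hx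
      have h1 : L s ∩ A = L s := inter_eq_self_of_subset_left hsub
      have h2 : L s ∩ (B \ A) = ∅ := by
        apply eq_empty_of_subset_empty
        intro x hx
        exact absurd (hsub hx.1) hx.2.2
      rw [hθapp _ (hLmeas s), h1, h2]
      simp only [measure_empty, mul_zero, add_zero]
      exact hLdom s
    · have hsub : B ⊆ L s := fun x hx => lt_of_lt_of_le hcase hx
      have h1 : L s ∩ A = A := inter_eq_self_of_subset_right (hABsub.trans hsub)
      have h2 : L s ∩ (B \ A) = B \ A :=
        inter_eq_self_of_subset_right (diff_subset.trans hsub)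
      rw [hθapp _ (hLmeas s), h1, h2, hmass]
      exact hLm s
  -- lintegral identity
  have hint : ∀ ν : Measure α, ∫⁻ x, ENNReal.ofReal (φ x) ∂ν = ∑ j, (t j : ℝ≥0∞) * ν (I j) := by
    intro ν
    have hpt : ∀ x, ENNReal.ofReal (φ x)
        = ∑ j, (t j : ℝ≥0∞) * (I j).indicator (fun _ => (1:ℝ≥0∞)) x := by
      intro x
      rw [hφ, ENNReal.ofReal_sum_of_nonneg]
      · apply Finset.sum_congr rfl
        intro j _
        by_cases h : x ∈ I j <;> simp [Set.indicator, h]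
      · intro j _
        apply mul_nonneg (t j).2
        by_cases h : x ∈ I j <;> simp [Set.indicator, h]
    calc ∫⁻ x, ENNReal.ofReal (φ x) ∂ν
        = ∫⁻ x, ∑ j, (t j : ℝ≥0∞) * (I j).indicator (fun _ => (1:ℝ≥0∞)) x ∂ν := by
          simp only [hpt]
      _ = ∑ j, ∫⁻ x, (t j : ℝ≥0∞) * (I j).indicator (fun _ => (1:ℝ≥0∞)) x ∂ν := by
          apply lintegral_finset_sum
          intro j _
          exact (measurable_const.indicator (hIm j)).const_mul _
      _ = ∑ j, (t j : ℝ≥0∞) * ν (I j) := by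
          apply Finset.sum_congr rfl
          intro j _
          rw [lintegral_const_mul _ (measurable_const.indicator (hIm j))]
          congr 1
          rw [lintegral_indicator (hIm j)]
          simp
  refine ⟨θ, hθle, by rw [hθuniv], ?_⟩
  rw [← hint κ, ← hint θ]
  rw [lintegral_eq_lintegral_meas_lt κ (Eventually.of_forall hφnn) hφmeas.aemeasurable,
    lintegral_eq_lintegral_meas_lt θ (Eventually.of_forall hφnn) hφmeas.aemeasurable]
  refine lintegral_mono_ae ?_
  filter_upwards [ae_restrict_mem measurableSet_Ioi] with s _
  exact hlevel s


lemma measure_le_of_toReal_le {μ ν : Measure α} [IsFiniteMeasure μ] [IsFiniteMeasure ν]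
    {A : Set α} (h : (μ A).toReal ≤ (ν A).toReal) : μ A ≤ ν A :=
  (ENNReal.toReal_le_toReal (measure_ne_top μ A) (measure_ne_top ν A)).1 h

/-- Finite-family version of the core trimming lemma. -/
lemma fin (r : α → α → Prop) (κ τ : Measure α) [IsFiniteMeasure τ] [IsFiniteMeasure κ]
    (hdom : ∀ I : Set α, MeasurableSet I → UpClosed r I → κ I ≤ τ I)
    (hm : κ univ ≤ τ univ)
    (F : Finset {I : Set α // MeasurableSet I ∧ UpClosed r I}) :
    ∃ θ : Measure α, θ ≤ τ ∧ θ univ = κ univ ∧ ∀ I ∈ F, κ I.1 ≤ θ I.1 := by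
  classical
  by_contra hcon
  push_neg at hcon
  set J := {x : {I : Set α // MeasurableSet I ∧ UpClosed r I} // x ∈ F} with hJ
  set K : Set (J → ℝ) := {w | ∃ θ : Measure α, θ ≤ τ ∧ θ univ = κ univ ∧
    ∀ j : J, w j = (θ j.1.1).toReal} with hK
  set N : Set (J → ℝ) := {w | ∀ j : J, (κ j.1.1).toReal ≤ w j} with hN
  have hFinOf : ∀ θ : Measure α, θ ≤ τ → IsFiniteMeasure θ := fun θ hθ =>
    ⟨lt_of_le_of_lt (Measure.le_iff.1 hθ univ MeasurableSet.univ) (measure_lt_top τ _)⟩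
  -- disjointness
  have hdisj : Disjoint K N := by
    rw [Set.disjoint_left]
    rintro w ⟨θ, hθle, hθu, hθw⟩ hwN
    haveI := hFinOf θ hθle
    obtain ⟨I, hIF, hnot⟩ := hcon θ hθle hθu
    have h1 := hwN ⟨I, hIF⟩
    rw [hθw ⟨I, hIF⟩] at h1
    exact absurd (measure_le_of_toReal_le h1) hnot.not_ge
  -- convexity of K
  have hKconv : Convex ℝ K := by
    rintro w₁ ⟨θ₁, h₁le, h₁u, h₁w⟩ w₂ ⟨θ₂, h₂le, h₂u, h₂w⟩ a b ha hb hab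
    haveI := hFinOf θ₁ h₁le
    haveI := hFinOf θ₂ h₂le
    refine ⟨ENNReal.ofReal a • θ₁ + ENNReal.ofReal b • θ₂, ?_, ?_, ?_⟩
    · refine Measure.le_iff.2 fun s hs => ?_
      have : ENNReal.ofReal a * θ₁ s + ENNReal.ofReal b * θ₂ s
          ≤ ENNReal.ofReal a * τ s + ENNReal.ofReal b * τ s := by
        gcongr
      simp only [Measure.add_apply, Measure.smul_apply, smul_eq_mul]
      refine this.trans ?_
      rw [← add_mul, ← ENNReal.ofReal_add ha hb, hab, ENNReal.ofReal_one, one_mul]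
    · simp only [Measure.add_apply, Measure.smul_apply, smul_eq_mul, h₁u, h₂u]
      rw [← add_mul, ← ENNReal.ofReal_add ha hb, hab, ENNReal.ofReal_one, one_mul]
    · intro j
      simp only [Measure.add_apply, Measure.smul_apply, smul_eq_mul]
      rw [ENNReal.toReal_add (by finiteness) (by finiteness), ENNReal.toReal_mul,
        ENNReal.toReal_mul, ENNReal.toReal_ofReal ha, ENNReal.toReal_ofReal hb]
      simp only [Pi.add_apply, Pi.smul_apply, smul_eq_mul, h₁w j, h₂w j]
  -- compactness of K
  have hKsub : K ⊆ univ.pi fun _ : J => Icc (0:ℝ) (τ univ).toReal := by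
    rintro w ⟨θ, hθle, hθu, hθw⟩ j _
    haveI := hFinOf θ hθle
    refine ⟨by rw [hθw j]; exact ENNReal.toReal_nonneg, ?_⟩
    rw [hθw j]
    apply ENNReal.toReal_mono (measure_ne_top τ _)
    exact le_trans (measure_mono (subset_univ _)) (Measure.le_iff.1 hθle univ MeasurableSet.univ)
  have hKclosed : IsClosed K := by
    refine IsSeqClosed.isClosed ?_
    intro wseq w hseq hconv
    choose θs hθsle hθsu hθsw using hseq
    set 𝔘 : Ultrafilter ℕ := Ultrafilter.of atTop with h𝔘
    have h𝔘le : (𝔘 : Filter ℕ) ≤ atTop := Ultrafilter.of_le _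
    refine ⟨ufMeasure 𝔘 θs τ hθsle, ufMeasure_le 𝔘 θs τ hθsle, ?_, ?_⟩
    · rw [ufMeasure_apply 𝔘 θs τ hθsle MeasurableSet.univ]
      have : (fun n => θs n univ) = fun _ => κ univ := funext hθsu
      rw [this, uflim_const]
    · intro j
      have hwconv : Tendsto (fun n => wseq n j) atTop (𝓝 (w j)) := by
        exact (continuous_apply j).continuousAt.tendsto.comp hconv
      have hnn : 0 ≤ w j :=
        ge_of_tendsto' hwconv (fun n => by rw [hθsw n j]; exact ENNReal.toReal_nonneg)
      have hofreal : Tendsto (fun n => θs n j.1.1) (𝔘 : Filter ℕ) (𝓝 (ENNReal.ofReal (w j))) := by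
        have h1 : ∀ n, θs n j.1.1 = ENNReal.ofReal (wseq n j) := by
          intro n
          haveI := hFinOf (θs n) (hθsle n)
          rw [hθsw n j, ENNReal.ofReal_toReal (measure_ne_top _ _)]
        have h2 : Tendsto (fun n => ENNReal.ofReal (wseq n j)) atTop
            (𝓝 (ENNReal.ofReal (w j))) :=
          (ENNReal.continuous_ofReal.tendsto _).comp hwconv
        rw [funext h1]
        exact h2.mono_left h𝔘le
      rw [ufMeasure_apply 𝔘 θs τ hθsle j.1.2.1, uflim_eq 𝔘 hofreal,
        ENNReal.toReal_ofReal hnn]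
  have hKcomp : IsCompact K :=
    (isCompact_univ_pi fun _ => isCompact_Icc).of_isClosed_subset hKclosed hKsub
  -- N closed convex
  have hNclosed : IsClosed N := by
    have : N = ⋂ j : J, {w : J → ℝ | (κ j.1.1).toReal ≤ w j} := by
      ext w; simp [hN, mem_iInter]
    rw [this]
    exact isClosed_iInter fun j => isClosed_le continuous_const (continuous_apply j)
  have hNconv : Convex ℝ N := by
    rintro w₁ h₁ w₂ h₂ a b ha hb hab j
    have e1 := h₁ j
    have e2 := h₂ j
    simp only [Pi.add_apply, Pi.smul_apply, smul_eq_mul]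
    calc (κ (j.1.1 : Set α)).toReal = (a+b) * (κ (j.1.1 : Set α)).toReal := by
          rw [hab, one_mul]
      _ = a * (κ (j.1.1 : Set α)).toReal + b * (κ (j.1.1 : Set α)).toReal := by ring
      _ ≤ a * w₁ j + b * w₂ j :=
          add_le_add (mul_le_mul_of_nonneg_left e1 ha) (mul_le_mul_of_nonneg_left e2 hb)
  -- separation
  obtain ⟨f, u, v, hfu, huv, hfv⟩ :=
    geometric_hahn_banach_compact_closed hKconv hKcomp hNconv hNclosed hdisj
  set t' : J → ℝ := fun j => f (Pi.single j (1:ℝ)) with ht'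
  have hrep : ∀ w : J → ℝ, f w = ∑ j, w j * t' j := by
    intro w
    have hw : w = ∑ j, (w j) • (Pi.single j (1:ℝ) : J → ℝ) := by
      rw [show (fun j => (w j) • (Pi.single j (1:ℝ) : J → ℝ)) = fun j => Pi.single j (w j) from ?_,
        Finset.univ_sum_single]
      funext j
      rw [← Pi.single_smul, smul_eq_mul, mul_one]
    conv_lhs => rw [hw]
    rw [map_sum]
    exact Finset.sum_congr rfl fun j _ => by rw [_root_.map_smul, smul_eq_mul, ht']
  set κvec : J → ℝ := fun j => (κ j.1.1).toReal with hκvec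
  have hκvecN : κvec ∈ N := fun j => le_refl _
  have hnn : ∀ j, 0 ≤ t' j := by
    intro j
    by_contra hneg
    push_neg at hneg
    have hfκv : v < f κvec := hfv _ hκvecN
    have h1 : 0 < -(t' j) := by linarith
    have h2 : 0 ≤ (f κvec - v) / (-(t' j)) := div_nonneg (by linarith) h1.le
    set cc : ℝ := (f κvec - v) / (-(t' j)) + 1 with hcc
    have hccpos : 0 ≤ cc := by rw [hcc]; linarith
    have hbN : κvec + cc • (Pi.single j (1:ℝ) : J → ℝ) ∈ N := by
      intro i
      simp only [Pi.add_apply, Pi.smul_apply, smul_eq_mul]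
      rcases eq_or_ne i j with h | h
      · subst h
        simp only [Pi.single_eq_same, mul_one]
        linarith [hκvecN i]
      · simp only [Pi.single_eq_of_ne h, mul_zero, add_zero]
        exact hκvecN i
    have hfb : f (κvec + cc • (Pi.single j (1:ℝ) : J → ℝ)) = f κvec + cc * t' j := by
      rw [map_add, _root_.map_smul, smul_eq_mul, ht']
    have hval : f κvec + cc * t' j < v := by
      have h1 : 0 < -(t' j) := by linarith
      have : cc * t' j = -(f κvec - v) + t' j := by
        rw [hcc, add_mul, one_mul, div_mul_eq_mul_div, mul_div_assoc, div_neg, div_self hneg.ne]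
        ring
      rw [this]
      linarith
    have := hfv _ hbN
    rw [hfb] at this
    linarith
  -- apply finkey
  set t : J → ℝ≥0 := fun j => ⟨t' j, hnn j⟩ with ht
  obtain ⟨θ, hθle, hθu, hθkey⟩ := finkey r κ τ hdom hm (fun j : J => j.1.1)
    (fun j => j.1.2.1) (fun j => j.1.2.2) t
  haveI := hFinOf θ hθle
  set wθ : J → ℝ := fun j => (θ j.1.1).toReal with hwθ
  have hwθK : wθ ∈ K := ⟨θ, hθle, hθu, fun j => rfl⟩
  have hfinal : f κvec ≤ f wθ := by
    rw [hrep κvec, hrep wθ]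
    have hen : ∀ (ν : Measure α) (hc : IsFiniteMeasure ν),
        (∑ j, (t j : ℝ≥0∞) * ν (j.1.1 : Set α)).toReal
          = ∑ j : J, (ν j.1.1).toReal * t' j := by
      intro ν hc
      rw [ENNReal.toReal_sum]
      · refine Finset.sum_congr rfl fun j _ => ?_
        rw [ENNReal.toReal_mul, ENNReal.coe_toReal, mul_comm]
        rfl
      · intro j _
        exact ENNReal.mul_ne_top ENNReal.coe_ne_top (measure_ne_top ν _)
    rw [← hen κ inferInstance, ← hen θ inferInstance]
    apply ENNReal.toReal_mono
    · apply ne_of_lt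
      apply lt_of_le_of_lt (Finset.sum_le_sum fun j _ =>
        mul_le_mul_right (Measure.le_iff.1 hθle _ j.1.2.1) _)
      exact ENNReal.sum_lt_top.2 fun j _ =>
        ENNReal.mul_lt_top ENNReal.coe_lt_top (measure_lt_top τ _)
    · exact hθkey
  have h1 := hfu _ hwθK
  have h2 := hfv _ hκvecN
  linarith

/-- Core trimming lemma: if `κ ≤ τ` on all `r`-upward-closed sets and in total mass,
then `τ` can be trimmed to a measure of the same total mass as `κ` that still
dominates `κ` on all `r`-upward-closed sets. -/
lemma core (r : α → α → Prop) (κ τ : Measure α) [IsFiniteMeasure τ] [IsFiniteMeasure κ]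
    (hdom : ∀ I : Set α, MeasurableSet I → UpClosed r I → κ I ≤ τ I)
    (hm : κ univ ≤ τ univ) :
    ∃ θ : Measure α, θ ≤ τ ∧ θ univ = κ univ ∧
      ∀ I : Set α, MeasurableSet I → UpClosed r I → κ I ≤ θ I := by
  classical
  set Υ := {I : Set α // MeasurableSet I ∧ UpClosed r I} with hΥ
  choose Θ hΘle hΘu hΘc using fun F : Finset Υ => fin r κ τ hdom hm F
  set 𝔘 : Ultrafilter (Finset Υ) := Ultrafilter.of atTop with h𝔘
  have h𝔘le : (𝔘 : Filter (Finset Υ)) ≤ atTop := Ultrafilter.of_le _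
  refine ⟨ufMeasure 𝔘 Θ τ hΘle, ufMeasure_le 𝔘 Θ τ hΘle, ?_, ?_⟩
  · rw [ufMeasure_apply 𝔘 Θ τ hΘle MeasurableSet.univ]
    rw [show (fun F => Θ F univ) = fun _ => κ univ from funext hΘu]
    exact uflim_const 𝔘 _
  · intro I hIm hIu
    rw [ufMeasure_apply 𝔘 Θ τ hΘle hIm]
    have hev : ∀ᶠ F in (𝔘 : Filter (Finset Υ)), κ I ≤ Θ F I := by
      apply h𝔘le
      filter_upwards [eventually_ge_atTop {(⟨I, hIm, hIu⟩ : Υ)}] with F hF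
      exact hΘc F ⟨I, hIm, hIu⟩ (hF (Finset.mem_singleton_self _))
    exact ge_of_tendsto (tendsto_uflim 𝔘 _) hev

end UF

end AlphaOAux

open Filter Set
open scoped ENNReal NNReal Topology

/-- Monotonicity of ordered affinity under a monotone Markov kernel:
widening the initial measures in the stochastic dominance order can only
increase the ordered affinity after one step. -/
theorem alphaO_bind_mono {S₀ S₁ : Type*}
    [TopologicalSpace S₀] [PolishSpace S₀] [MeasurableSpace S₀] [BorelSpace S₀]
    [PartialOrder S₀] [OrderClosedTopology S₀] [Nonempty S₀]
    [TopologicalSpace S₁] [PolishSpace S₁] [MeasurableSpace S₁] [BorelSpace S₁]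
    [PartialOrder S₁] [OrderClosedTopology S₁] [Nonempty S₁]
    (P : S₀ → Measure S₁) (hPmeas : Measurable P)
    (hPprob : ∀ x, IsProbabilityMeasure (P x))
    (hPmono : ∀ x y : S₀, x ≤ y → StochDom (P x) (P y))
    (μ μ' ν ν' : Measure S₀) [IsProbabilityMeasure μ] [IsProbabilityMeasure μ']
    [IsProbabilityMeasure ν] [IsProbabilityMeasure ν']
    (h1 : StochDom μ' μ) (h2 : StochDom ν ν') :
    alphaO (μ.bind P) (ν.bind P) ≤ alphaO (μ'.bind P) (ν'.bind P) := by
  classical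
  -- basic facts about bind
  have hba : ∀ (ξ : Measure S₀) {s : Set S₁}, MeasurableSet s →
      (ξ.bind P) s = ∫⁻ x, P x s ∂ξ := fun ξ _ hs => Measure.bind_apply hs hPmeas.aemeasurable
  have hbuniv : ∀ (ξ : Measure S₀) [IsProbabilityMeasure ξ], (ξ.bind P) univ = 1 := by
    intro ξ hξ
    rw [hba ξ MeasurableSet.univ]
    have : ∀ x, P x univ = 1 := fun x => (hPprob x).measure_univ
    simp [this]
  haveI hPμ : IsProbabilityMeasure (μ.bind P) := ⟨hbuniv μ⟩
  haveI hPμ' : IsProbabilityMeasure (μ'.bind P) := ⟨hbuniv μ'⟩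
  haveI hPν : IsProbabilityMeasure (ν.bind P) := ⟨hbuniv ν⟩
  haveI hPν' : IsProbabilityMeasure (ν'.bind P) := ⟨hbuniv ν'⟩
  -- monotone transport of stochastic domination through the kernel, on upper sets
  have key : ∀ (ξ₁ ξ₂ : Measure S₀), StochDom ξ₁ ξ₂ →
      ∀ I : Set S₁, MeasurableSet I → IsUpperSet I →
        (ξ₁.bind P) I ≤ (ξ₂.bind P) I := by
    intro ξ₁ ξ₂ hsd I hIm hIu
    rw [hba ξ₁ hIm, hba ξ₂ hIm]
    have hgm : Measurable fun x => P x I := (Measure.measurable_coe hIm).comp hPmeas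
    set f : S₀ → ℝ := fun x => (P x I).toReal with hf
    have hfm : Measurable f := hgm.ennreal_toReal
    have hrw : ∀ x, P x I = ENNReal.ofReal (f x) := by
      intro x
      haveI := hPprob x
      rw [hf, ENNReal.ofReal_toReal (measure_ne_top (P x) I)]
    have hmono : ∀ ⦃x y : S₀⦄, x ≤ y → f x ≤ f y := by
      intro x y hxy
      haveI := hPprob y
      exact ENNReal.toReal_mono (measure_ne_top (P y) I) ((hPmono x y hxy).2 I hIm hIu)
    calc ∫⁻ x, P x I ∂ξ₁ = ∫⁻ x, ENNReal.ofReal (f x) ∂ξ₁ := by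
          exact lintegral_congr hrw
      _ = ∫⁻ t in Ioi (0:ℝ), ξ₁ {a | t < f a} := by
          exact lintegral_eq_lintegral_meas_lt ξ₁ (Eventually.of_forall fun x =>
            ENNReal.toReal_nonneg) hfm.aemeasurable
      _ ≤ ∫⁻ t in Ioi (0:ℝ), ξ₂ {a | t < f a} := by
          refine lintegral_mono fun t => ?_
          refine hsd.2 _ (measurableSet_lt measurable_const hfm) ?_
          intro x y hxy hx
          exact lt_of_lt_of_le hx (hmono hxy)
      _ = ∫⁻ x, ENNReal.ofReal (f x) ∂ξ₂ := by
          exact (lintegral_eq_lintegral_meas_lt ξ₂ (Eventually.of_forall fun x =>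
            ENNReal.toReal_nonneg) hfm.aemeasurable).symm
      _ = ∫⁻ x, P x I ∂ξ₂ := (lintegral_congr hrw).symm
  -- finiteness of dominated measures
  have hFinOf : ∀ (θ τ : Measure S₁), θ ≤ τ → IsFiniteMeasure τ → IsFiniteMeasure θ :=
    fun θ τ hθ hτ =>
      ⟨lt_of_le_of_lt (Measure.le_iff.1 hθ univ MeasurableSet.univ) (measure_lt_top τ _)⟩
  -- set inclusion of the defining sets
  apply csSup_le_csSup
  · refine ⟨1, ?_⟩
    rintro rr ⟨κ, l, ⟨hκle, _, _⟩, rfl⟩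
    have : κ univ ≤ 1 := by
      rw [← hbuniv μ']
      exact Measure.le_iff.1 hκle univ MeasurableSet.univ
    calc (κ univ).toReal ≤ (1 : ℝ≥0∞).toReal := ENNReal.toReal_mono ENNReal.one_ne_top this
      _ = 1 := by simp
  · refine ⟨0, 0, 0, ⟨Measure.zero_le _, Measure.zero_le _, rfl, fun I _ _ => le_rfl⟩, by simp⟩
  · rintro rr ⟨κ, l, ⟨hκle, hlle, hsdκl⟩, rfl⟩
    haveI hκfin : IsFiniteMeasure κ := hFinOf κ _ hκle inferInstance
    haveI hlfin : IsFiniteMeasure l := hFinOf l _ hlle inferInstance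
    -- step 1: trim μ'.bind P below κ on all lower sets
    have hdomL : ∀ L : Set S₁, MeasurableSet L → AlphaOAux.UpClosed (fun a b => b ≤ a) L →
        κ L ≤ (μ'.bind P) L := by
      intro L hLm hLl
      have hupper : IsUpperSet Lᶜ := fun a b hab ha hb => ha (hLl hab hb)
      have hcompl : (μ.bind P) Lᶜ ≥ (μ'.bind P) Lᶜ := key μ' μ h1 Lᶜ hLm.compl hupper
      have e1 : (μ.bind P) L = 1 - (μ.bind P) Lᶜ := by
        conv_lhs => rw [← compl_compl L]
        exact prob_compl_eq_one_sub hLm.compl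
      have e2 : (μ'.bind P) L = 1 - (μ'.bind P) Lᶜ := by
        conv_lhs => rw [← compl_compl L]
        exact prob_compl_eq_one_sub hLm.compl
      calc κ L ≤ (μ.bind P) L := Measure.le_iff.1 hκle L hLm
        _ = 1 - (μ.bind P) Lᶜ := e1
        _ ≤ 1 - (μ'.bind P) Lᶜ := tsub_le_tsub_left hcompl 1
        _ = (μ'.bind P) L := e2.symm
    have hmL : κ univ ≤ (μ'.bind P) univ := by
      rw [hbuniv μ', ← hbuniv μ]
      exact Measure.le_iff.1 hκle univ MeasurableSet.univ
    obtain ⟨κ', hκ'le, hκ'u, hκ'dom⟩ := AlphaOAux.core (fun a b => b ≤ a) κ (μ'.bind P) hdomL hmL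
    haveI hκ'fin : IsFiniteMeasure κ' := hFinOf κ' _ hκ'le inferInstance
    -- κ' is below κ on upper sets
    have hκ'upper : ∀ I : Set S₁, MeasurableSet I → IsUpperSet I → κ' I ≤ κ I := by
      intro I hIm hIu
      have hlower : AlphaOAux.UpClosed (fun a b : S₁ => b ≤ a) Iᶜ := fun a b hab ha hb => ha (hIu hab hb)
      have hcompl : κ Iᶜ ≤ κ' Iᶜ := hκ'dom Iᶜ hIm.compl hlower
      have hsum : κ' I + κ' Iᶜ = κ I + κ Iᶜ := by
        rw [measure_add_measure_compl hIm, measure_add_measure_compl hIm, hκ'u]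
      have : κ' I + κ Iᶜ ≤ κ I + κ Iᶜ := by
        calc κ' I + κ Iᶜ ≤ κ' I + κ' Iᶜ := by gcongr
          _ = κ I + κ Iᶜ := hsum
      exact ENNReal.le_of_add_le_add_right (measure_ne_top κ Iᶜ) this
    -- step 2: trim ν'.bind P above κ' on all upper sets
    have hdomR : ∀ I : Set S₁, MeasurableSet I → AlphaOAux.UpClosed (fun a b : S₁ => a ≤ b) I →
        κ' I ≤ (ν'.bind P) I := by
      intro I hIm hIu
      have hIu' : IsUpperSet I := fun a b hab ha => hIu hab ha
      calc κ' I ≤ κ I := hκ'upper I hIm hIu'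
        _ ≤ l I := hsdκl.2 I hIm hIu'
        _ ≤ (ν.bind P) I := Measure.le_iff.1 hlle I hIm
        _ ≤ (ν'.bind P) I := key ν ν' h2 I hIm hIu'
    have hmR : κ' univ ≤ (ν'.bind P) univ := by
      rw [hbuniv ν', hκ'u, ← hbuniv μ]
      exact Measure.le_iff.1 hκle univ MeasurableSet.univ
    obtain ⟨l', hl'le, hl'u, hl'dom⟩ := AlphaOAux.core (fun a b : S₁ => a ≤ b) κ' (ν'.bind P) hdomR hmR
    refine ⟨κ', l', ⟨hκ'le, hl'le, hl'u.symm, ?_⟩, by rw [hκ'u]⟩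
    intro I hIm hIu
    exact hl'dom I hIm fun a b hab ha => hIu hab ha
end
end

section
/- If P is a monotone Markov kernel from S₀ to S₁, then for all Borel probability measures μ and ν on S₀, α_O(μP, νP) ≥ α_O(μ, ν). -/
open MeasureTheory

noncomputable section

variable {S : Type*} [TopologicalSpace S] [PolishSpace S] [MeasurableSpace S]
  [BorelSpace S] [PartialOrder S] [OrderClosedTopology S] [Nonempty S]

/-- A stochastically dominated pair integrates monotone bounded functions monotonically. -/
lemma lintegral_mono_of_stochDom {α : Type*} [MeasurableSpace α] [Preorder α]
    {μ ν : Measure α} (h : StochDom μ ν) {g : α → ENNReal}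
    (hg : Measurable g) (hgmono : ∀ x y, x ≤ y → g x ≤ g y) (hgle : ∀ x, g x ≤ 1) :
    ∫⁻ x, g x ∂μ ≤ ∫⁻ x, g x ∂ν := by
  have hfin : ∀ x, g x ≠ ⊤ := fun x => ne_top_of_le_ne_top ENNReal.one_ne_top (hgle x)
  have hrw : ∀ x, g x = ENNReal.ofReal ((g x).toReal) := fun x =>
    (ENNReal.ofReal_toReal (hfin x)).symm
  have hf_mble : Measurable fun x => (g x).toReal := hg.ennreal_toReal
  calc ∫⁻ x, g x ∂μ = ∫⁻ x, ENNReal.ofReal ((g x).toReal) ∂μ := by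
        simp only [← hrw]
    _ = ∫⁻ t in Set.Ioi 0, μ {a | t < (g a).toReal} := by
        exact lintegral_eq_lintegral_meas_lt μ
          (Filter.Eventually.of_forall fun x => ENNReal.toReal_nonneg) hf_mble.aemeasurable
    _ ≤ ∫⁻ t in Set.Ioi 0, ν {a | t < (g a).toReal} := by
        refine lintegral_mono fun t => ?_
        refine h.2 _ (measurableSet_lt measurable_const hf_mble) ?_
        intro x y hxy hx
        exact lt_of_lt_of_le hx (ENNReal.toReal_le_toReal (hfin x) (hfin y) |>.mpr
          (hgmono x y hxy))
    _ = ∫⁻ x, ENNReal.ofReal ((g x).toReal) ∂ν := by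
        exact (lintegral_eq_lintegral_meas_lt ν
          (Filter.Eventually.of_forall fun x => ENNReal.toReal_nonneg) hf_mble.aemeasurable).symm
    _ = ∫⁻ x, g x ∂ν := by simp only [← hrw]

/-- A monotone Markov kernel does not decrease ordered affinity. -/
theorem alphaO_le_alphaO_bind {S₀ S₁ : Type*}
    [TopologicalSpace S₀] [PolishSpace S₀] [MeasurableSpace S₀] [BorelSpace S₀]
    [PartialOrder S₀] [OrderClosedTopology S₀] [Nonempty S₀]
    [TopologicalSpace S₁] [PolishSpace S₁] [MeasurableSpace S₁] [BorelSpace S₁]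
    [PartialOrder S₁] [OrderClosedTopology S₁] [Nonempty S₁]
    (P : S₀ → Measure S₁) (hPmeas : Measurable P)
    (hPprob : ∀ x, IsProbabilityMeasure (P x))
    (hPmono : ∀ x y : S₀, x ≤ y → StochDom (P x) (P y))
    (μ ν : Measure S₀) [IsProbabilityMeasure μ] [IsProbabilityMeasure ν] :
    alphaO μ ν ≤ alphaO (μ.bind P) (ν.bind P) := by
  have hPcoe : ∀ {s : Set S₁}, MeasurableSet s → Measurable fun x => P x s :=
    fun hs => (Measure.measurable_coe hs).comp hPmeas
  have hmass : ∀ m : Measure S₀, (m.bind P) Set.univ = m Set.univ := by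
    intro m
    rw [Measure.bind_apply MeasurableSet.univ hPmeas.aemeasurable]
    simp [measure_univ]
  refine csSup_le_csSup ?_ ?_ ?_
  · -- bounded above by 1
    refine ⟨1, fun r hr => ?_⟩
    obtain ⟨μ', ν', ⟨hμ', _, _⟩, rfl⟩ := hr
    have h1 : μ' Set.univ ≤ (μ.bind P) Set.univ := hμ' Set.univ
    rw [hmass μ] at h1
    replace h1 : μ' Set.univ ≤ 1 := h1.trans_eq (measure_univ (μ := μ))
    calc (μ' Set.univ).toReal ≤ (1 : ENNReal).toReal :=
          ENNReal.toReal_mono ENNReal.one_ne_top h1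
      _ = 1 := by simp
  · -- nonempty
    exact ⟨0, 0, 0, ⟨bot_le, bot_le, rfl, fun I _ _ => le_rfl⟩, by simp⟩
  · -- inclusion
    rintro r ⟨μ', ν', ⟨hμ', hν', hmassEq, hsd⟩, rfl⟩
    refine ⟨μ'.bind P, ν'.bind P, ⟨?_, ?_, ?_, ?_⟩, ?_⟩
    · refine Measure.le_iff.mpr fun s hs => ?_
      rw [Measure.bind_apply hs hPmeas.aemeasurable, Measure.bind_apply hs hPmeas.aemeasurable]
      exact lintegral_mono' hμ' le_rfl
    · refine Measure.le_iff.mpr fun s hs => ?_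
      rw [Measure.bind_apply hs hPmeas.aemeasurable, Measure.bind_apply hs hPmeas.aemeasurable]
      exact lintegral_mono' hν' le_rfl
    · rw [hmass μ', hmass ν']; exact hmassEq
    · intro I hI hIu
      rw [Measure.bind_apply hI hPmeas.aemeasurable, Measure.bind_apply hI hPmeas.aemeasurable]
      exact lintegral_mono_of_stochDom ⟨hmassEq, hsd⟩ (hPcoe hI)
        (fun x y hxy => (hPmono x y hxy).2 I hI hIu)
        (fun x => prob_le_one)
    · rw [hmass μ']
end
end

section
/- Let P be a monotone Markov kernel on S and let g(μ, ν) := μ(S) − α_O(μ, ν) for finite Borel measures μ, ν. If (μ̃, ν̃) is an ordered component pair for (μ, ν), then g(μP, νP) ≤ g((μ − μ̃)P, (ν − ν̃)P), where μ − μ̃ and ν − ν̃ are the (setwise nonnegative) residual measures. -/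
open MeasureTheory
open ENNReal

noncomputable section

section Aux

variable {α : Type*} [MeasurableSpace α] [Preorder α]

lemma StochDom.zero : StochDom (0 : Measure α) 0 := ⟨rfl, fun _ _ _ => le_rfl⟩

lemma StochDom.add' {μ ν μ' ν' : Measure α} (h : StochDom μ ν) (h' : StochDom μ' ν') :
    StochDom (μ + μ') (ν + ν') := by
  refine ⟨by simp [Measure.add_apply, h.1, h'.1], fun I hI hU => ?_⟩
  simp only [Measure.add_apply]
  exact add_le_add (h.2 I hI hU) (h'.2 I hI hU)

lemma lintegral_mono_of_stochDom_s16 {μ ν : Measure α} (h : StochDom μ ν) {f : α → ℝ≥0∞}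
    (hf : Measurable f) (hmono : Monotone f) (hbd : ∀ x, f x ≤ 1) :
    ∫⁻ x, f x ∂μ ≤ ∫⁻ x, f x ∂ν := by
  have hne : ∀ x, f x ≠ ⊤ := fun x => ((hbd x).trans_lt ENNReal.one_lt_top).ne
  have hrw : ∀ x, f x = ENNReal.ofReal ((f x).toReal) := fun x =>
    (ENNReal.ofReal_toReal (hne x)).symm
  have hg : Measurable fun x => (f x).toReal := hf.ennreal_toReal
  have hgmono : Monotone fun x => (f x).toReal := fun a b hab =>
    ENNReal.toReal_mono (hne b) (hmono hab)
  have hupper : ∀ t : ℝ, IsUpperSet {a : α | t < (f a).toReal} := fun t a b hab ha =>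
    lt_of_lt_of_le ha (hgmono hab)
  have hms : ∀ t : ℝ, MeasurableSet {a : α | t < (f a).toReal} := fun t =>
    measurableSet_lt measurable_const hg
  calc ∫⁻ x, f x ∂μ = ∫⁻ x, ENNReal.ofReal ((f x).toReal) ∂μ := by
        apply lintegral_congr; intro x; exact hrw x
    _ = ∫⁻ t in Set.Ioi 0, μ {a : α | t < (f a).toReal} :=
        lintegral_eq_lintegral_meas_lt μ
          (Filter.Eventually.of_forall fun x => ENNReal.toReal_nonneg) hg.aemeasurable
    _ ≤ ∫⁻ t in Set.Ioi 0, ν {a : α | t < (f a).toReal} :=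
        lintegral_mono fun t => h.2 _ (hms t) (hupper t)
    _ = ∫⁻ x, ENNReal.ofReal ((f x).toReal) ∂ν :=
        (lintegral_eq_lintegral_meas_lt ν
          (Filter.Eventually.of_forall fun x => ENNReal.toReal_nonneg) hg.aemeasurable).symm
    _ = ∫⁻ x, f x ∂ν := by apply lintegral_congr; intro x; exact (hrw x).symm

lemma bind_univ_eq {μ : Measure α} {P : α → Measure α} (hP : Measurable P)
    (hprob : ∀ x, IsProbabilityMeasure (P x)) : (μ.bind P) Set.univ = μ Set.univ := by
  rw [Measure.bind_apply MeasurableSet.univ hP.aemeasurable]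
  simp only [measure_univ, lintegral_one]

lemma bind_add_meas {a b : Measure α} {P : α → Measure α} (hP : Measurable P) :
    (a + b).bind P = a.bind P + b.bind P := by
  ext s hs
  rw [Measure.add_apply, Measure.bind_apply hs hP.aemeasurable, Measure.bind_apply hs hP.aemeasurable,
    Measure.bind_apply hs hP.aemeasurable, lintegral_add_measure]

lemma stochDom_bind {P : α → Measure α} (hPmeas : Measurable P)
    (hPprob : ∀ x, IsProbabilityMeasure (P x))
    (hPmono : ∀ x y : α, x ≤ y → StochDom (P x) (P y))
    {μ ν : Measure α} (h : StochDom μ ν) : StochDom (μ.bind P) (ν.bind P) := by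
  constructor
  · rw [bind_univ_eq hPmeas hPprob, bind_univ_eq hPmeas hPprob, h.1]
  · intro I hI hU
    rw [Measure.bind_apply hI hPmeas.aemeasurable, Measure.bind_apply hI hPmeas.aemeasurable]
    exact lintegral_mono_of_stochDom_s16 h ((Measure.measurable_coe hI).comp hPmeas)
      (fun a b hab => (hPmono a b hab).2 I hI hU) (fun x => prob_le_one)

end Aux

variable {S : Type*} [TopologicalSpace S] [PolishSpace S] [MeasurableSpace S]
  [BorelSpace S] [PartialOrder S] [OrderClosedTopology S] [Nonempty S]

/-- Removing an ordered component pair before applying a monotone Markov kernel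
can only increase the deficiency g. -/
theorem g_bind_le_g_residual_bind
    (P : S → Measure S) (hPmeas : Measurable P)
    (hPprob : ∀ x, IsProbabilityMeasure (P x))
    (hPmono : ∀ x y : S, x ≤ y → StochDom (P x) (P y))
    (μ ν μt νt : Measure S) [IsFiniteMeasure μ] [IsFiniteMeasure ν]
    (hocp : IsOCP μ ν μt νt) :
    ((μ.bind P) Set.univ).toReal - alphaO (μ.bind P) (ν.bind P) ≤
      (((μ - μt).bind P) Set.univ).toReal -
        alphaO ((μ - μt).bind P) ((ν - νt).bind P) := by
  obtain ⟨hμt, hνt, hsd⟩ := hocp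
  haveI : IsFiniteMeasure μt := isFiniteMeasure_of_le μ hμt
  haveI : IsFiniteMeasure νt := isFiniteMeasure_of_le ν hνt
  have hμdec : (μ - μt).bind P + μt.bind P = μ.bind P := by
    rw [← bind_add_meas hPmeas, Measure.sub_add_cancel_of_le hμt]
  have hνdec : (ν - νt).bind P + νt.bind P = ν.bind P := by
    rw [← bind_add_meas hPmeas, Measure.sub_add_cancel_of_le hνt]
  set m : ℝ := ((μt.bind P) Set.univ).toReal with hm
  -- finiteness facts
  have hμbind_fin : (μ.bind P) Set.univ ≠ ⊤ := by
    rw [bind_univ_eq hPmeas hPprob]; exact (measure_ne_top μ _)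
  have hresbind_fin : ((μ - μt).bind P) Set.univ ≠ ⊤ := by
    rw [bind_univ_eq hPmeas hPprob]; exact (measure_ne_top _ _)
  have hμtbind_fin : (μt.bind P) Set.univ ≠ ⊤ := by
    rw [bind_univ_eq hPmeas hPprob]; exact (measure_ne_top _ _)
  -- mass decomposition
  have hmass : ((μ.bind P) Set.univ).toReal = (((μ - μt).bind P) Set.univ).toReal + m := by
    rw [← hμdec, Measure.add_apply, ENNReal.toReal_add hresbind_fin hμtbind_fin]
  -- sets
  set A := {r : ℝ | ∃ μ' ν' : Measure S, IsOCP (μ.bind P) (ν.bind P) μ' ν' ∧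
    r = (μ' Set.univ).toReal} with hA
  set B := {r : ℝ | ∃ μ' ν' : Measure S, IsOCP ((μ - μt).bind P) ((ν - νt).bind P) μ' ν' ∧
    r = (μ' Set.univ).toReal} with hB
  have hB_ne : B.Nonempty := ⟨0, 0, 0, ⟨Measure.zero_le _, Measure.zero_le _, StochDom.zero⟩, by simp⟩
  have hA_bdd : BddAbove A := by
    refine ⟨((μ.bind P) Set.univ).toReal, ?_⟩
    rintro r ⟨μ', ν', ⟨h1, _, _⟩, rfl⟩
    exact ENNReal.toReal_mono hμbind_fin (h1 Set.univ)
  have hsdP : StochDom (μt.bind P) (νt.bind P) := stochDom_bind hPmeas hPprob hPmono hsd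
  have hshift : ∀ r ∈ B, r + m ∈ A := by
    rintro r ⟨μ', ν', ⟨h1, h2, h3⟩, rfl⟩
    refine ⟨μ' + μt.bind P, ν' + νt.bind P, ⟨?_, ?_, h3.add' hsdP⟩, ?_⟩
    · rw [← hμdec]; exact add_le_add h1 le_rfl
    · rw [← hνdec]; exact add_le_add h2 le_rfl
    · have hμ'fin : μ' Set.univ ≠ ⊤ :=
        ((h1 Set.univ).trans_lt (lt_top_iff_ne_top.mpr hresbind_fin)).ne
      rw [Measure.add_apply, ENNReal.toReal_add hμ'fin hμtbind_fin]
  have hsup : alphaO ((μ - μt).bind P) ((ν - νt).bind P) + m ≤ alphaO (μ.bind P) (ν.bind P) := by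
    rw [alphaO, alphaO]
    have : sSup B ≤ sSup A - m := by
      apply csSup_le hB_ne
      intro r hr
      have := le_csSup hA_bdd (hshift r hr)
      linarith
    linarith
  linarith [hsup, hmass]
end
end
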